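/- arXiv:math/0309214 — 7 statements merged into one kernel-verified Lean document; each statement's English description precedes it below -/
import Mathlib

section
/- Let J : ℕ → ℚ(v) be defined by J(0) = 0 and, for n ≥ 1, J(n) = v^{1-n}/(1 - q^{-1}) · Σ_{k=0}^{n-1} q^{-kn} ∏_{j=0}^{k} (1 - q^{j-n}), where q = v². Then J(1) = 1, and for every n ≥ 2 the following three-term recursion holds in ℚ(v): J(n) = ((q^{n-1} + q^{4-4n} - q^{-n} - q^{1-2n}) / (v·(q^{n-1} - q^{2-n}))) · J(n-1) + ((q^{4-4n} - q^{3-2n}) / (q^{2-n} - q^{n-1})) · J(n-2). -/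
/-
The colored Jones function of the 0-framed right-hand trefoil, given by the
single sum J(n) = v^{1-n}/(1-q^{-1}) Σ_{k=0}^{n-1} q^{-kn} ∏_{j=0}^{k} (1-q^{j-n})
(with q = v²), satisfies J(1) = 1 and a three-term recursion.
-/

noncomputable section

namespace Stmt0

/-- The variable `v` of the field ℚ(v). -/
def v : RatFunc ℚ := RatFunc.X

/-- `q = v²`. -/
def q : RatFunc ℚ := v ^ 2

/-- The colored Jones function of the right-hand trefoil. -/
def J (n : ℕ) : RatFunc ℚ :=
  if n = 0 then 0 else
    v ^ (1 - (n : ℤ)) / (1 - q ^ (-1 : ℤ)) *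
      ∑ k ∈ Finset.range n,
        q ^ (-((k : ℤ) * (n : ℤ))) *
          ∏ j ∈ Finset.range (k + 1), (1 - q ^ ((j : ℤ) - (n : ℤ)))

/-!
Write `c = q⁻ⁿ`. The `k`-th summand of `J n` is then `cᵏ (c; q)ₖ₊₁`, which contains the
factor `1 - c qⁿ = 0` as soon as `k ≥ n`; so the sums for `J n`, `J (n - 1)` and `J (n - 2)`
(whose parameters are `c`, `c q` and `c q²`) may be taken over a common range. Both `k ↦ k + 1`
and `c ↦ c q` multiply the summand by a polynomial in `c` and `t = qᵏ`, and creative telescoping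
(Zeilberger's algorithm) yields a certificate `R(c, q, t)`, vanishing at `t = 1`, such that the
three-term operator applied to the summand equals `R(qᵏ⁺¹) aₖ₊₁ - R(qᵏ) aₖ`. Summing over `k`, only
the two boundary terms survive, and both vanish.
-/

open Finset

section CommRing

variable {R : Type*} [CommRing R]

def qPochhammer (a x : R) (n : ℕ) : R := ∏ j ∈ range n, (1 - a * x ^ j)

theorem qPochhammer_succ (a x : R) (n : ℕ) :
    qPochhammer a x (n + 1) = qPochhammer a x n * (1 - a * x ^ n) :=
  prod_range_succ _ n

theorem qPochhammer_succ' (a x : R) (n : ℕ) :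
    qPochhammer a x (n + 1) = (1 - a) * qPochhammer (a * x) x n := by
  simp only [qPochhammer, prod_range_succ', pow_succ, pow_zero, mul_one, mul_assoc, mul_comm]

theorem qPochhammer_eq_zero {a x : R} {j n : ℕ} (hj : j < n) (h : a * x ^ j = 1) :
    qPochhammer a x n = 0 :=
  prod_eq_zero (mem_range.2 hj) (by rw [h, sub_self])

def trefoilSummand (c x : R) (k : ℕ) : R := c ^ k * qPochhammer c x (k + 1)

def trefoilSum (c x : R) (n : ℕ) : R := ∑ k ∈ range n, trefoilSummand c x k

theorem trefoilSummand_succ (c x : R) (k : ℕ) :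
    trefoilSummand c x (k + 1) = c * (1 - c * x ^ (k + 1)) * trefoilSummand c x k := by
  rw [trefoilSummand, trefoilSummand, qPochhammer_succ _ _ (k + 1)]
  ring

theorem trefoilSummand_mul_right (c x : R) (k : ℕ) :
    (1 - c) * trefoilSummand (c * x) x k
      = x ^ k * (1 - c * x ^ (k + 1)) * trefoilSummand c x k := by
  have h := (qPochhammer_succ' c x (k + 1)).symm.trans (qPochhammer_succ c x (k + 1))
  rw [trefoilSummand, trefoilSummand]
  linear_combination (c * x) ^ k * h

theorem trefoilSummand_eq_zero {c x : R} {j k : ℕ} (hj : j ≤ k) (h : c * x ^ j = 1) :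
    trefoilSummand c x k = 0 := by
  rw [trefoilSummand, qPochhammer_eq_zero (Nat.lt_succ_of_le hj) h, mul_zero]

def trefoilCertificate (c x t : R) : R :=
  (t - 1) * ((1 - x * c) * (1 - x ^ 3 * c ^ 2)
    + x * c * (x ^ 3 * c ^ 3 + x ^ 3 * c ^ 2 + x * c ^ 2 - x ^ 4 * c ^ 4 - x ^ 2 * c - 1) * t
    + x ^ 4 * c ^ 3 * (1 - x * c ^ 2) * t ^ 2)

theorem trefoilCertificate_one (c x : R) : trefoilCertificate c x 1 = 0 := by
  rw [trefoilCertificate, sub_self, zero_mul]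

theorem trefoilSummand_telescoping (c x : R) (k : ℕ) :
    (1 - c) * (1 - x * c) *
      ((1 - x ^ 3 * c ^ 2) * trefoilSummand c x k
        - (1 + x ^ 5 * c ^ 5 - x * c ^ 2 - x ^ 2 * c ^ 3) * trefoilSummand (c * x) x k
        + (x ^ 6 * c ^ 5 - x ^ 5 * c ^ 3) * trefoilSummand (c * x * x) x k)
      = trefoilCertificate c x (x ^ (k + 1)) * trefoilSummand c x (k + 1)
        - trefoilCertificate c x (x ^ k) * trefoilSummand c x k := by
  have h1 := trefoilSummand_mul_right c x k
  have h2 := trefoilSummand_mul_right (c * x) x k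
  rw [trefoilSummand_succ, trefoilCertificate, trefoilCertificate]
  linear_combination (1 - c) * (x ^ 6 * c ^ 5 - x ^ 5 * c ^ 3) * h2
    + ((x ^ 6 * c ^ 5 - x ^ 5 * c ^ 3) * x ^ k * (1 - c * x * x ^ (k + 1))
      - (1 - x * c) * (1 + x ^ 5 * c ^ 5 - x * c ^ 2 - x ^ 2 * c ^ 3)) * h1

theorem trefoilSum_succ_of_summand_eq_zero {c x : R} {n : ℕ} (h : trefoilSummand c x n = 0) :
    trefoilSum c x (n + 1) = trefoilSum c x n := by
  rw [trefoilSum, sum_range_succ, h, add_zero, trefoilSum]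

theorem trefoilSum_recurrence [IsDomain R] {c x : R} {n : ℕ} (hc : c * x ^ (n + 2) = 1)
    (hc₁ : c ≠ 1) (hc₂ : x * c ≠ 1) :
    (1 - x ^ 3 * c ^ 2) * trefoilSum c x (n + 2)
      - (1 + x ^ 5 * c ^ 5 - x * c ^ 2 - x ^ 2 * c ^ 3) * trefoilSum (c * x) x (n + 1)
      + (x ^ 6 * c ^ 5 - x ^ 5 * c ^ 3) * trefoilSum (c * x ^ 2) x n = 0 := by
  rw [show c * x ^ 2 = c * x * x by ring]
  have hcx : c * x * x ^ (n + 1) = 1 := by rwa [mul_assoc, ← pow_succ']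
  have hcxx : c * x * x * x ^ n = 1 := by rwa [mul_assoc, ← pow_succ']
  have hsum₁ : trefoilSum (c * x) x (n + 2) = trefoilSum (c * x) x (n + 1) :=
    trefoilSum_succ_of_summand_eq_zero (trefoilSummand_eq_zero le_rfl hcx)
  have hsum₂ : trefoilSum (c * x * x) x (n + 2) = trefoilSum (c * x * x) x n := by
    rw [trefoilSum_succ_of_summand_eq_zero (trefoilSummand_eq_zero n.le_succ hcxx),
      trefoilSum_succ_of_summand_eq_zero (trefoilSummand_eq_zero le_rfl hcxx)]
  set f : ℕ → R := fun k => trefoilCertificate c x (x ^ k) * trefoilSummand c x k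
  have htele : (1 - c) * (1 - x * c) *
      ((1 - x ^ 3 * c ^ 2) * trefoilSum c x (n + 2)
        - (1 + x ^ 5 * c ^ 5 - x * c ^ 2 - x ^ 2 * c ^ 3) * trefoilSum (c * x) x (n + 2)
        + (x ^ 6 * c ^ 5 - x ^ 5 * c ^ 3) * trefoilSum (c * x * x) x (n + 2)) = 0 :=
    calc _ = ∑ k ∈ range (n + 2), (f (k + 1) - f k) := by
          simp only [trefoilSum, mul_sum, ← sum_sub_distrib, ← sum_add_distrib]
          exact sum_congr rfl fun k _ => trefoilSummand_telescoping c x k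
      _ = f (n + 2) - f 0 := sum_range_sub f _
      _ = 0 := by simp [f, trefoilSummand_eq_zero le_rfl hc, trefoilCertificate_one]
  rw [hsum₁, hsum₂] at htele
  exact (mul_eq_zero.1 htele).resolve_left
    (mul_ne_zero (sub_ne_zero.2 hc₁.symm) (sub_ne_zero.2 hc₂.symm))

end CommRing

section Field

variable {K : Type*} [Field K] {x : K}

theorem zpow_sub_mul_eq (hx : x ≠ 0) (a b N : ℤ) :
    x ^ (a - b * N) = x ^ a * (x ^ (-N)) ^ b := by
  rw [← zpow_mul, ← zpow_add₀ hx]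
  ring_nf

theorem trefoil_coeff₁_eq (hx : x ≠ 0) (y : K) (N : ℤ) :
    (x ^ (N - 1) + x ^ (4 - 4 * N) - x ^ (-N) - x ^ (1 - 2 * N)) / (y * (x ^ (N - 1) - x ^ (2 - N)))
      = (1 + x ^ 5 * (x ^ (-N)) ^ 5 - x * (x ^ (-N)) ^ 2 - x ^ 2 * (x ^ (-N)) ^ 3)
        / (y * (1 - x ^ 3 * (x ^ (-N)) ^ 2)) := by
  rw [show N - 1 = -1 - (-1) * N by ring, show 2 - N = 2 - 1 * N by ring, zpow_sub_mul_eq hx (-1),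
    zpow_sub_mul_eq hx 4, zpow_sub_mul_eq hx 1, zpow_sub_mul_eq hx 2]
  set c := x ^ (-N)
  have hc : c ≠ 0 := zpow_ne_zero _ hx
  simp only [zpow_neg, zpow_ofNat]
  rw [← mul_div_mul_right _ _ (mul_ne_zero hx hc)]
  congr 1 <;> field_simp

theorem trefoil_coeff₂_eq (hx : x ≠ 0) (N : ℤ) :
    (x ^ (4 - 4 * N) - x ^ (3 - 2 * N)) / (x ^ (2 - N) - x ^ (N - 1))
      = (x ^ 5 * (x ^ (-N)) ^ 3 - x ^ 6 * (x ^ (-N)) ^ 5) / (x * (1 - x ^ 3 * (x ^ (-N)) ^ 2)) := by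
  rw [show N - 1 = -1 - (-1) * N by ring, show 2 - N = 2 - 1 * N by ring, zpow_sub_mul_eq hx (-1),
    zpow_sub_mul_eq hx 4, zpow_sub_mul_eq hx 3, zpow_sub_mul_eq hx 2]
  set c := x ^ (-N)
  have hc : c ≠ 0 := zpow_ne_zero _ hx
  simp only [zpow_neg, zpow_ofNat]
  rw [← mul_div_mul_right _ _ (neg_ne_zero.2 (mul_ne_zero hx (mul_ne_zero hx hc)))]
  congr 1 <;> field_simp <;> ring

end Field

theorem v_zpow_ne_one {z : ℤ} (hz : z ≠ 0) : v ^ z ≠ 1 := by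
  have hpow : ∀ n : ℕ, 0 < n → v ^ n ≠ 1 := fun n hn h => by
    have hdeg : (v ^ n).intDegree = n := by
      rw [v, ← RatFunc.algebraMap_X, ← map_pow, RatFunc.intDegree_polynomial,
        Polynomial.natDegree_X_pow]
    rw [h, RatFunc.intDegree_one] at hdeg
    omega
  rcases Int.natAbs_eq z with h | h <;> rw [h]
  · rw [zpow_natCast]; exact hpow _ (Int.natAbs_pos.2 hz)
  · rw [zpow_neg, inv_ne_one, zpow_natCast]; exact hpow _ (Int.natAbs_pos.2 hz)

theorem v_ne_zero : v ≠ 0 := RatFunc.X_ne_zero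

theorem q_ne_zero : q ≠ 0 := pow_ne_zero 2 v_ne_zero

theorem q_zpow_ne_one {z : ℤ} (hz : z ≠ 0) : q ^ z ≠ 1 := by
  rw [q, ← zpow_natCast, ← zpow_mul]
  exact v_zpow_ne_one (by omega)

theorem q_pow_mul_zpow_ne_one {a b : ℕ} {N : ℤ} (h : (a : ℤ) ≠ b * N) :
    q ^ a * (q ^ (-N)) ^ b ≠ 1 := by
  rw [← zpow_natCast, ← zpow_natCast, ← zpow_sub_mul_eq q_ne_zero]
  exact q_zpow_ne_one (sub_ne_zero.2 h)

theorem J_eq_trefoilSum (n : ℕ) :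
    J n = v ^ (1 - (n : ℤ)) / (1 - q ^ (-1 : ℤ)) * trefoilSum (q ^ (-(n : ℤ))) q n := by
  rw [J]
  split_ifs with hn
  · simp [hn, trefoilSum]
  · congr 1
    refine Finset.sum_congr rfl fun k _ => ?_
    rw [trefoilSummand, qPochhammer, ← zpow_natCast, ← zpow_mul, neg_mul, mul_comm (k : ℤ)]
    congr 1
    refine Finset.prod_congr rfl fun j _ => ?_
    rw [show (j : ℤ) - n = -n + j by ring, zpow_add₀ q_ne_zero, zpow_natCast]

theorem J_eq_trefoilSum_of_add {m k N : ℕ} (h : m + k = N) :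
    J m = v ^ (1 - (N : ℤ)) * v ^ k / (1 - q ^ (-1 : ℤ))
      * trefoilSum (q ^ (-(N : ℤ)) * q ^ k) q m := by
  subst h
  rw [J_eq_trefoilSum, ← zpow_natCast v, ← zpow_natCast q, ← zpow_add₀ v_ne_zero,
    ← zpow_add₀ q_ne_zero]
  push_cast
  ring_nf

theorem J_one : J 1 = 1 := by
  have h : 1 - q⁻¹ ≠ 0 := by
    rw [← zpow_neg_one]; exact sub_ne_zero.2 (q_zpow_ne_one (by norm_num)).symm
  simp [J_eq_trefoilSum, trefoilSum, trefoilSummand, qPochhammer, h]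

theorem trefoil_recursion :
    J 1 = 1 ∧
    ∀ n : ℕ, 2 ≤ n →
      J n = ((q ^ ((n : ℤ) - 1) + q ^ (4 - 4 * (n : ℤ)) - q ^ (-(n : ℤ))
              - q ^ (1 - 2 * (n : ℤ))) /
            (v * (q ^ ((n : ℤ) - 1) - q ^ (2 - (n : ℤ))))) * J (n - 1)
          + ((q ^ (4 - 4 * (n : ℤ)) - q ^ (3 - 2 * (n : ℤ))) /
            (q ^ (2 - (n : ℤ)) - q ^ ((n : ℤ) - 1))) * J (n - 2) := by
  refine ⟨J_one, fun n hn => ?_⟩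
  obtain ⟨m, rfl⟩ := Nat.exists_eq_add_of_le' hn
  rw [show m + 2 - 1 = m + 1 by omega, Nat.add_sub_cancel, J_eq_trefoilSum_of_add (k := 0) rfl,
    J_eq_trefoilSum_of_add (k := 1) (N := m + 2) rfl, J_eq_trefoilSum_of_add (k := 2) rfl,
    trefoil_coeff₁_eq q_ne_zero, trefoil_coeff₂_eq q_ne_zero]
  simp only [pow_zero, pow_one, mul_one]
  set c := q ^ (-((m + 2 : ℕ) : ℤ))
  have hrec := trefoilSum_recurrence (c := c) (x := q) (n := m)
    (by rw [← zpow_natCast, ← zpow_add₀ q_ne_zero, neg_add_cancel, zpow_zero])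
    (by simpa only [pow_zero, one_mul, pow_one] using
      q_pow_mul_zpow_ne_one (a := 0) (b := 1) (N := (m + 2 : ℕ)) (by omega))
    (by simpa only [pow_one] using
      q_pow_mul_zpow_ne_one (a := 1) (b := 1) (N := (m + 2 : ℕ)) (by omega))
  have hD : 1 - q ^ 3 * c ^ 2 ≠ 0 :=
    sub_ne_zero.2 (q_pow_mul_zpow_ne_one (a := 3) (b := 2) (N := (m + 2 : ℕ)) (by omega)).symm
  have hE : 1 - q ^ (-1 : ℤ) ≠ 0 := sub_ne_zero.2 (q_zpow_ne_one (by norm_num)).symm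
  generalize trefoilSum c q (m + 2) = S₀, trefoilSum (c * q) q (m + 1) = S₁,
    trefoilSum (c * q ^ 2) q m = S₂, v ^ (1 - ((m + 2 : ℕ) : ℤ)) = w, 1 - q ^ (-1 : ℤ) = E at *
  rw [show v ^ 2 = q from rfl]
  field_simp [v_ne_zero, q_ne_zero]
  linear_combination w * hrec

end Stmt0
end
end

section
/- Let c(p,·) : ℕ → ℚ(q) be defined by c(p,n) = (-1)^{n+1} q^{n(n+3)/2} Σ_{k=0}^{n} (-1)^k q^{k(k+1)p + k(k-1)/2} (q^{2k+1} − 1) (q;q)_n / ((q;q)_{n+k+1} (q;q)_{n-k}). Then c(-1, n) = 1 for all n ∈ ℕ; equivalently, c(-1, n) = c(-1, n-1) for all n ≥ 1 and c(-1,0) = 1. -/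
noncomputable section

namespace StmtC

/-- The variable `q` of the field ℚ(q). -/
def q : RatFunc ℚ := RatFunc.X

/-- The q-Pochhammer symbol `(q;q)_m = ∏_{i=1}^{m} (1 - qⁱ)`. -/
def qq (m : ℕ) : RatFunc ℚ := ∏ i ∈ Finset.range m, (1 - q ^ (i + 1))

/-- Masbaum's formula for the cyclotomic function of the p-th twist knot. -/
def c (p : ℤ) (n : ℕ) : RatFunc ℚ :=
  (-1) ^ (n + 1) * q ^ ((n : ℤ) * ((n : ℤ) + 3) / 2) *
    ∑ k ∈ Finset.range (n + 1),
      (-1) ^ k * q ^ ((k : ℤ) * ((k : ℤ) + 1) * p + (k : ℤ) * ((k : ℤ) - 1) / 2) *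
        (q ^ (2 * k + 1) - 1) * qq n / (qq (n + k + 1) * qq (n - k))

end StmtC

/-! The summands `F n k` of `c (-1) n` (`term`) and the certificate `G n k` (`cert`) form a WZ pair:
`F (n+1) k - F n k = G n (k+1) - G n k`, with `G n 0 = 0` and `F (n+1) (n+1) = -G n (n+1)`.
Summing over `k` telescopes to `c (-1) (n+1) = c (-1) n`, and `c (-1) 0 = 1` is a direct
computation. Divided by the hypergeometric factor common to its four terms, the WZ relation
becomes a polynomial identity in `q`, `q ^ k` and `q ^ (n - k)`. -/

namespace StmtC

open Finset

lemma sum_range_eq_of_wz_pair {M : Type*} [AddCommGroup M] {f g G : ℕ → M} {n : ℕ}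
    (hstep : ∀ k ≤ n, g k - f k = G (k + 1) - G k) (hG : G 0 = 0) (hlast : g (n + 1) = -G (n + 1)) :
    ∑ k ∈ range (n + 2), g k = ∑ k ∈ range (n + 1), f k := by
  have htel : ∑ k ∈ range (n + 1), (g k - f k) = G (n + 1) := by
    rw [sum_congr rfl fun k hk => hstep k (Nat.lt_succ_iff.mp (mem_range.mp hk)), sum_range_sub,
      hG, sub_zero]
  rw [sum_sub_distrib] at htel
  rw [sum_range_succ, hlast, ← htel]
  abel

lemma _root_.RatFunc.one_sub_X_pow_ne_zero {K : Type*} [Field K] {m : ℕ} (hm : m ≠ 0) :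
    (1 : RatFunc K) - RatFunc.X ^ m ≠ 0 := by
  rw [sub_ne_zero, ne_comm, ← RatFunc.algebraMap_X, ← map_pow,
    ← map_one (algebraMap (Polynomial K) (RatFunc K)), (RatFunc.algebraMap_injective K).ne_iff]
  intro h
  simpa [hm] using congrArg Polynomial.natDegree h

lemma q_ne_zero : q ≠ 0 := RatFunc.X_ne_zero

lemma one_sub_q_pow_succ_ne_zero (m : ℕ) : 1 - q ^ (m + 1) ≠ 0 :=
  RatFunc.one_sub_X_pow_ne_zero m.succ_ne_zero

lemma qq_zero : qq 0 = 1 := prod_range_zero _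

lemma qq_succ (m : ℕ) : qq (m + 1) = qq m * (1 - q ^ (m + 1)) := prod_range_succ _ m

lemma qq_ne_zero (m : ℕ) : qq m ≠ 0 :=
  prod_ne_zero_iff.2 fun i _ => one_sub_q_pow_succ_ne_zero i

def qExp (k : ℕ) : ℤ := k * (k + 3) / 2

lemma two_mul_qExp (k : ℕ) : 2 * qExp k = k * (k + 3) := by
  have : 2 ∣ (k : ℤ) * (k + 3) := by
    rw [show (k : ℤ) * (k + 3) = k * (k + 1) + 2 * k by ring]
    exact dvd_add (Int.even_mul_succ_self _).two_dvd (dvd_mul_right 2 _)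
  exact Int.mul_ediv_cancel' this

lemma qExp_succ (k : ℕ) : qExp (k + 1) = qExp k + (k + 2) := by
  have h := two_mul_qExp (k + 1)
  have h' := two_mul_qExp k
  push_cast at h
  linarith

lemma twist_exponent_neg_one (k : ℕ) :
    (k : ℤ) * (k + 1) * -1 + k * (k - 1) / 2 = -qExp k := by
  have h := two_mul_qExp k
  rw [show (k : ℤ) * (k - 1) = 2 * (qExp k - 2 * k) by linarith,
    Int.mul_ediv_cancel_left _ two_ne_zero]
  linarith

def term (n k : ℕ) : RatFunc ℚ :=
  (-1) ^ (n + 1 + k) * q ^ (qExp n - qExp k) * (q ^ (2 * k + 1) - 1) * qq n /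
    (qq (n + k + 1) * qq (n - k))

/-- The WZ certificate of `term`; only `m ≤ n + 1` is used, where `n + 1 - m` does not truncate. -/
def cert (n m : ℕ) : RatFunc ℚ :=
  (-1) ^ (n + m) * q ^ (qExp n - qExp m + m + 1) * (1 - q ^ m) * qq n /
    (qq (n + m + 1) * qq (n + 1 - m))

lemma c_neg_one_eq_sum (n : ℕ) : c (-1) n = ∑ k ∈ range (n + 1), term n k := by
  rw [c, mul_sum]
  refine sum_congr rfl fun k _ => ?_
  rw [twist_exponent_neg_one, term, zpow_sub₀ q_ne_zero, zpow_neg, pow_add]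
  change _ * q ^ qExp n * _ = _
  ring

/-- `term_succ_sub_term` divided by its common factor, with `x = q ^ k` and `y = q ^ (n - k)`. -/
lemma wz_polynomial_identity {R : Type*} [CommRing R] (q x y : R) :
    x * y * q ^ 2 * (q * x ^ 2 - 1) * (1 - q * x * y) +
        (q * x ^ 2 - 1) * (1 - q ^ 2 * x ^ 2 * y) * (1 - q * y) =
      -((1 - q * x) * (1 - q * y)) - x * q * (1 - x) * (1 - q ^ 2 * x ^ 2 * y) := by
  ring

lemma term_succ_sub_term {n k : ℕ} (hk : k ≤ n) :
    term (n + 1) k - term n k = cert n (k + 1) - cert n k := by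
  obtain ⟨j, rfl⟩ := Nat.exists_eq_add_of_le hk
  set u := q ^ (qExp (k + j) - qExp k) with hu
  have hexp₁ : q ^ (qExp (k + j + 1) - qExp k) = u * q ^ (k + j + 2) := by
    rw [hu, ← zpow_natCast, ← zpow_add₀ q_ne_zero, qExp_succ]
    congr 1
    push_cast
    ring
  have hexp₂ : q ^ (qExp (k + j) - qExp (k + 1) + (k + 1 : ℕ) + 1) = u := by
    rw [qExp_succ]
    congr 1
    push_cast
    ring
  have hexp₃ : q ^ (qExp (k + j) - qExp k + k + 1) = u * q ^ (k + 1) := by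
    rw [hu, ← zpow_natCast, ← zpow_add₀ q_ne_zero]
    congr 1
    push_cast
    ring
  simp only [term, cert, hexp₁, hexp₂, hexp₃]
  rw [show k + j + 1 - k = j + 1 by omega, show k + j - k = j by omega,
    show k + j + 1 - (k + 1) = j by omega, show k + j + (k + 1) + 1 = k + j + k + 1 + 1 by omega,
    show k + j + 1 + k + 1 = k + j + k + 1 + 1 by omega,
    qq_succ (k + j + k + 1), qq_succ j, qq_succ (k + j)]
  have := qq_ne_zero (k + j)
  have := qq_ne_zero (k + j + k + 1)
  have := qq_ne_zero j
  have := one_sub_q_pow_succ_ne_zero (k + j + k + 1)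
  have := one_sub_q_pow_succ_ne_zero j
  field_simp
  linear_combination u * (-1) ^ (k + j + k) * wz_polynomial_identity q (q ^ k) (q ^ j)

lemma cert_zero (n : ℕ) : cert n 0 = 0 := by
  simp [cert]

lemma term_succ_self (n : ℕ) : term (n + 1) (n + 1) = -cert n (n + 1) := by
  have hexp : qExp n - qExp (n + 1) + (n + 1 : ℕ) + 1 = 0 := by
    rw [qExp_succ]
    push_cast
    ring
  simp only [term, cert, sub_self, hexp, zpow_zero, Nat.sub_self, qq_zero,
    show n + 1 + (n + 1) + 1 = 2 * n + 2 + 1 by omega, show n + (n + 1) + 1 = 2 * n + 2 by omega,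
    qq_succ (2 * n + 2), qq_succ n]
  have := qq_ne_zero n
  have := qq_ne_zero (2 * n + 2)
  have := one_sub_q_pow_succ_ne_zero (2 * n + 2)
  field_simp
  ring

lemma c_neg_one_zero : c (-1) 0 = 1 := by
  rw [c_neg_one_eq_sum, sum_range_one]
  simpa [term, qq] using one_sub_q_pow_succ_ne_zero 0

lemma c_neg_one_succ (n : ℕ) : c (-1) (n + 1) = c (-1) n := by
  rw [c_neg_one_eq_sum, c_neg_one_eq_sum]
  exact sum_range_eq_of_wz_pair (fun k hk => term_succ_sub_term hk) (cert_zero n)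
    (term_succ_self n)

theorem cyclotomic_figure8_constant :
    (∀ n : ℕ, c (-1) n = 1) ∧
    ((∀ n : ℕ, 1 ≤ n → c (-1) n = c (-1) (n - 1)) ∧ c (-1) 0 = 1) := by
  have hconst (n : ℕ) : c (-1) n = 1 := by
    induction n with
    | zero => exact c_neg_one_zero
    | succ n ih => rw [c_neg_one_succ, ih]
  exact ⟨hconst, fun n _ => by rw [hconst, hconst], hconst 0⟩

end StmtC
end
end

section
/- For every integer n ≥ 1 the following identity holds in the ring ℚ(v)[z, z^{-1}] of Laurent polynomials over ℚ(v): ∏_{i=1}^{n-1} (z + z^{-1} − v^{2i-1} − v^{1-2i}) = Σ_{k=1}^{n} (−1)^{n-k} ({2k}/{2n}) · [2n choose n−k] · (z^k − z^{-k})/(z − z^{-1}), where (z^k − z^{-k})/(z − z^{-1}) = Σ_{j=0}^{k-1} z^{k-1-2j} is a Laurent polynomial. -/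
/-!
Multiplying both sides by `z - z⁻¹` turns the character `(z^k - z^{-k})/(z - z^{-1})` into
`z^k - z^{-k}`, so the right-hand side becomes the Laurent polynomial whose `k`-th coefficient is
`c(n,k) = (-1)^(n-k) {2k} {2n}! / ({2n} {n-k}! {n+k}!)` for every `k ∈ ℤ`, with `1/{j}! = 0` for
`j < 0`. Multiplication by `z + z⁻¹ - a` acts on coefficients as `c(k) ↦ c(k-1) + c(k+1) - a c(k)`,
so induction on `n` reduces the theorem to a three-term recurrence for `c`. After pulling out the
common factor `(-1)^(n-k) {2n-1}! / ({n-k+1}! {n+k+1}!)` this recurrence becomes an identity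
between products of three brackets, a Laurent polynomial identity in `v^a`, `v^b` and `v`.
-/

noncomputable section

namespace Stmt8

/-- The variable `v` of the field ℚ(v). -/
def v : RatFunc ℚ := RatFunc.X

/-- `{m} = v^m - v^{-m}`. -/
def brace (m : ℤ) : RatFunc ℚ := v ^ m - v ^ (-m)

/-- `{m}_k = ∏_{i=1}^{k} {m-i+1}`. -/
def braceP (m : ℤ) (k : ℕ) : RatFunc ℚ := ∏ i ∈ Finset.range k, brace (m - i)

/-- The balanced q-binomial `[m choose k] = {m}_k / {k}_k`. -/
def qbinom (m : ℤ) (k : ℕ) : RatFunc ℚ := braceP m k / braceP k k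

open LaurentPolynomial

lemma intDegree_X_zpow {K : Type*} [Field K] (m : ℤ) : (RatFunc.X ^ m : RatFunc K).intDegree = m := by
  have hpow (k : ℕ) : (RatFunc.X ^ k : RatFunc K).intDegree = k := by
    rw [← RatFunc.algebraMap_X, ← map_pow, RatFunc.intDegree_polynomial,
      Polynomial.natDegree_X_pow]
  obtain ⟨k, rfl | rfl⟩ := m.eq_nat_or_neg
  · rw [zpow_natCast, hpow]
  · rw [zpow_neg, zpow_natCast, RatFunc.intDegree_inv, hpow]

lemma brace_zero : brace 0 = 0 := by simp [brace]

lemma brace_neg (m : ℤ) : brace (-m) = -brace m := by rw [brace, brace, neg_neg, neg_sub]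

lemma brace_ne_zero {m : ℤ} (hm : m ≠ 0) : brace m ≠ 0 := fun h ↦ by
  have := congrArg RatFunc.intDegree (sub_eq_zero.mp h)
  rw [v, intDegree_X_zpow, intDegree_X_zpow] at this
  omega

theorem brace_mul_brace_mul_brace (a b : ℤ) :
    brace (2 * a) * brace (2 * b) * brace (2 * a + 1) =
      brace (2 * b - 2) * brace (a + b + 1) * brace (a + b)
      + brace (2 * b + 2) * brace (a - b) * brace (a - b + 1)
      + (v ^ (2 * a - 1) + v ^ (-(2 * a - 1))) * brace (2 * b) * brace (a + b + 1) * brace (a - b + 1) := by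
  have hv : v ≠ 0 := RatFunc.X_ne_zero
  simp only [brace, neg_sub, neg_add, two_mul, zpow_neg, zpow_add₀ hv, zpow_sub₀ hv, zpow_one]
  field_simp
  ring

lemma braceP_add (m : ℤ) (j l : ℕ) : braceP m (j + l) = braceP m j * braceP (m - j) l := by
  simp only [braceP, Finset.prod_range_add, Nat.cast_add, sub_sub]

def braceFact (k : ℕ) : RatFunc ℚ := braceP k k

lemma braceFact_succ (k : ℕ) : braceFact (k + 1) = brace (k + 1) * braceFact k := by
  rw [braceFact, add_comm k, braceP_add, braceFact]
  simp [braceP, add_comm]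

lemma braceFact_ne_zero (k : ℕ) : braceFact k ≠ 0 :=
  show braceP k k ≠ 0 from
    Finset.prod_ne_zero_iff.mpr fun i hi ↦ brace_ne_zero (by rw [Finset.mem_range] at hi; omega)

lemma qbinom_eq {m j : ℕ} (h : j ≤ m) :
    qbinom m j = braceFact m / (braceFact j * braceFact (m - j)) := by
  have hsplit : braceFact m = braceP m j * braceFact (m - j) := by
    rw [braceFact, braceFact, Nat.cast_sub h, ← braceP_add, Nat.add_sub_cancel' h]
  rw [qbinom, hsplit, ← braceFact, mul_div_mul_right _ _ (braceFact_ne_zero _)]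

/-- `1 / {j}!`, extended by `0` to negative `j` (like `1 / Γ`), so that
`invBraceFact_eq_brace_mul` holds for every `j`. -/
def invBraceFact (j : ℤ) : RatFunc ℚ := if 0 ≤ j then (braceFact j.toNat)⁻¹ else 0

lemma invBraceFact_natCast (k : ℕ) : invBraceFact k = (braceFact k)⁻¹ := by
  simp [invBraceFact]

lemma invBraceFact_of_neg {j : ℤ} (hj : j < 0) : invBraceFact j = 0 := by
  simp [invBraceFact, hj.not_ge]

lemma invBraceFact_eq_brace_mul (j : ℤ) :
    invBraceFact j = brace (j + 1) * invBraceFact (j + 1) := by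
  rcases lt_trichotomy j (-1) with hj | rfl | hj
  · rw [invBraceFact_of_neg (by omega), invBraceFact_of_neg (by omega), mul_zero]
  · rw [invBraceFact_of_neg (by omega), neg_add_cancel, brace_zero, zero_mul]
  · obtain ⟨k, rfl⟩ := Int.eq_ofNat_of_zero_le (by omega : 0 ≤ j)
    rw [← Nat.cast_succ, invBraceFact_natCast, invBraceFact_natCast, braceFact_succ, mul_inv,
      Nat.cast_succ, mul_inv_cancel_left₀ (brace_ne_zero (by omega))]

/-- The coefficient `(-1)^(n-k) ({2k}/{2n}) [2n choose n-k]` of the theorem, with the q-binomial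
written as `{2n}! / ({n-k}! {n+k}!)`; this extends it to all `k : ℤ`, odd in `k` and zero for
`|k| > n`. -/
def hmCoeff (n : ℕ) (k : ℤ) : RatFunc ℚ :=
  (-1) ^ ((n : ℤ) - k) * (brace (2 * k) / brace (2 * n)) *
    (braceFact (2 * n) * invBraceFact (n - k) * invBraceFact (n + k))

lemma hmCoeff_natCast_of_le {n k : ℕ} (hk : k ≤ n) :
    hmCoeff n k = (-1) ^ (n - k) * (brace (2 * k) / brace (2 * n)) * qbinom (2 * n) (n - k) := by
  have hq := qbinom_eq (m := 2 * n) (j := n - k) (by omega)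
  push_cast at hq
  rw [hmCoeff, hq, ← Nat.cast_sub hk, zpow_natCast,
    show (n : ℤ) + k = ((2 * n - (n - k) : ℕ) : ℤ) by omega, invBraceFact_natCast,
    invBraceFact_natCast]
  ring

lemma hmCoeff_neg (n : ℕ) (k : ℤ) : hmCoeff n (-k) = -hmCoeff n k := by
  have hsign : (-1 : RatFunc ℚ) ^ ((n : ℤ) - -k) = (-1) ^ ((n : ℤ) - k) := by
    rw [show (n : ℤ) - -k = (n - k) + 2 * k by ring, zpow_add₀ (by norm_num), zpow_mul]
    norm_num
  rw [hmCoeff, hmCoeff, hsign, mul_neg, brace_neg, sub_neg_eq_add, ← sub_eq_add_neg]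
  ring

lemma hmCoeff_zero (n : ℕ) : hmCoeff n 0 = 0 := by simp [hmCoeff, brace_zero]

lemma hmCoeff_of_lt {n : ℕ} {k : ℤ} (h : n < k) : hmCoeff n k = 0 := by
  simp [hmCoeff, invBraceFact_of_neg (sub_neg.mpr h)]

lemma hmCoeff_self {n : ℕ} (hn : n ≠ 0) : hmCoeff n n = 1 := by
  have h0 : invBraceFact 0 = 1 := by simp [invBraceFact, braceFact, braceP]
  rw [hmCoeff, sub_self, zpow_zero, one_mul, div_self (brace_ne_zero (by omega)), one_mul, h0,
    mul_one, show (n : ℤ) + n = ((2 * n : ℕ) : ℤ) by push_cast; ring, invBraceFact_natCast,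
    mul_inv_cancel₀ (braceFact_ne_zero _)]

lemma hmCoeff_add_two (n : ℕ) (k : ℤ) :
    hmCoeff (n + 2) k = hmCoeff (n + 1) (k - 1) + hmCoeff (n + 1) (k + 1)
      - (v ^ (2 * (n : ℤ) + 1) + v ^ (-(2 * (n : ℤ) + 1))) * hmCoeff (n + 1) k := by
  have hfact : braceFact (2 * (n + 2)) =
      brace (2 * ((n : ℤ) + 1 + 1)) * brace (2 * ((n : ℤ) + 1) + 1) * braceFact (2 * (n + 1)) := by
    rw [show 2 * (n + 2) = 2 * (n + 1) + 1 + 1 by ring, braceFact_succ, braceFact_succ]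
    push_cast
    ring_nf
  simp only [hmCoeff, hfact]
  push_cast
  generalize braceFact (2 * (n + 1)) = F
  rw [show (n : ℤ) + 2 = n + 1 + 1 by ring, show 2 * (n : ℤ) + 1 = 2 * (n + 1) - 1 by ring]
  have hN1 : brace (2 * ((n : ℤ) + 1)) ≠ 0 := brace_ne_zero (by omega)
  have hN2 : brace (2 * ((n : ℤ) + 1 + 1)) ≠ 0 := brace_ne_zero (by omega)
  generalize (n : ℤ) + 1 = N at *
  have shift (a b : ℤ) (h : a + 1 = b) : invBraceFact a = brace b * invBraceFact b := by
    rw [invBraceFact_eq_brace_mul, h]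
  have hsign : (-1 : RatFunc ℚ) ^ (N - k + 1) = -(-1) ^ (N - k) := by
    rw [zpow_add_one₀ (by norm_num)]
    ring
  have hsign' : (-1 : RatFunc ℚ) ^ (N - (k + 1)) = -(-1) ^ (N - k) := by
    rw [show N - k = N - (k + 1) + 1 by ring, zpow_add_one₀ (by norm_num)]
    ring
  rw [show N + 1 - k = N - k + 1 by ring, show N - (k - 1) = N - k + 1 by ring,
    show N + 1 + k = N + k + 1 by ring, show N + (k + 1) = N + k + 1 by ring,
    shift (N + (k - 1)) (N + k) (by ring), shift (N + k) (N + k + 1) rfl,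
    shift (N - (k + 1)) (N - k) (by ring), shift (N - k) (N - k + 1) rfl, hsign, hsign']
  field_simp
  linear_combination (norm := ring_nf)
    -(F * invBraceFact (N - k + 1) * invBraceFact (N + k + 1)) * brace_mul_brace_mul_brace N k

/-- `z - z⁻¹` times the right-hand side of the theorem. -/
def hmNumerator (n : ℕ) : LaurentPolynomial (RatFunc ℚ) :=
  ∑ k ∈ Finset.Icc 1 n, C (hmCoeff n k) * (T k - T (-k))

lemma coeff_hmNumerator (n : ℕ) (j : ℤ) : (hmNumerator n).coeff j = hmCoeff n j := by
  have hsupp (p : ℕ) : (if p ∈ Finset.Icc 1 n then hmCoeff n p else 0) = hmCoeff n p := by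
    split_ifs with h
    · rfl
    · rcases Nat.eq_zero_or_pos p with rfl | hp
      · rw [Nat.cast_zero, hmCoeff_zero]
      · rw [hmCoeff_of_lt (by rw [Finset.mem_Icc] at h; omega)]
  simp only [hmNumerator, mul_sub, ← single_eq_C_mul_T, AddMonoidAlgebra.coeff_sum,
    AddMonoidAlgebra.coeff_sub, AddMonoidAlgebra.coeff_single, Finset.sum_sub_distrib,
    Finsupp.coe_finsetSum, Finsupp.coe_sub, Pi.sub_apply, Finset.sum_apply, Finsupp.single_apply]
  obtain ⟨p, rfl | rfl⟩ := j.eq_nat_or_neg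
  · have h0 : ∑ x ∈ Finset.Icc 1 n, (if -(x : ℤ) = p then hmCoeff n x else 0) = 0 :=
      Finset.sum_eq_zero fun x hx ↦ if_neg (by rw [Finset.mem_Icc] at hx; omega)
    rw [h0, sub_zero]
    simp only [Nat.cast_inj, Finset.sum_ite_eq', hsupp]
  · have h0 : ∑ x ∈ Finset.Icc 1 n, (if (x : ℤ) = -p then hmCoeff n x else 0) = 0 :=
      Finset.sum_eq_zero fun x hx ↦ if_neg (by rw [Finset.mem_Icc] at hx; omega)
    rw [h0, zero_sub, hmCoeff_neg]
    simp only [neg_inj, Nat.cast_inj, Finset.sum_ite_eq', hsupp]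

lemma hmNumerator_mul (n : ℕ) :
    hmNumerator (n + 1) * (T 1 + T (-1) - C (v ^ (2 * (n : ℤ) + 1) + v ^ (-(2 * (n : ℤ) + 1))))
      = hmNumerator (n + 2) := by
  ext j
  simp only [mul_sub, mul_add, T, ← single_eq_C, AddMonoidAlgebra.coeff_add,
    AddMonoidAlgebra.coeff_sub, AddMonoidAlgebra.coeff_mul_single_apply, Finsupp.add_apply,
    Finsupp.sub_apply, coeff_hmNumerator]
  rw [hmCoeff_add_two]
  ring_nf

lemma T_one_sub_T_neg_one_mul_sum {R : Type*} [Ring R] (k : ℕ) :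
    (T 1 - T (-1) : R[T;T⁻¹]) * ∑ j ∈ Finset.range k, T ((k : ℤ) - 1 - 2 * j) = T k - T (-k) := by
  have hterm (j : ℕ) : (T 1 - T (-1) : R[T;T⁻¹]) * T ((k : ℤ) - 1 - 2 * j) =
      T (k - 2 * j) - T (k - 2 * (j + 1 : ℕ)) := by
    rw [sub_mul, ← T_add, ← T_add]
    congr 2 <;> push_cast <;> ring
  rw [Finset.mul_sum, Finset.sum_congr rfl fun j _ ↦ hterm j,
    Finset.sum_range_sub' (fun j : ℕ ↦ (T ((k : ℤ) - 2 * j) : R[T;T⁻¹]))]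
  congr 2
  ring

lemma T_one_sub_T_neg_one_ne_zero {R : Type*} [Ring R] [Nontrivial R] :
    (T 1 - T (-1) : R[T;T⁻¹]) ≠ 0 := fun h ↦ by
  simpa using congrArg (·.coeff 1) h

lemma T_one_sub_T_neg_one_mul_prod (m : ℕ) :
    (T 1 - T (-1)) * ∏ i ∈ Finset.range m,
      (T 1 + T (-1) - C (v ^ (2 * (i : ℤ) + 1) + v ^ (-(2 * (i : ℤ) + 1))))
      = hmNumerator (m + 1) := by
  induction m with
  | zero =>
    rw [Finset.prod_range_zero, mul_one, zero_add, hmNumerator, Finset.Icc_self,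
      Finset.sum_singleton, hmCoeff_self one_ne_zero, map_one, one_mul, Nat.cast_one]
  | succ m ih => rw [Finset.prod_range_succ, ← mul_assoc, ih, hmNumerator_mul]

theorem habiro_masbaum_character :
    ∀ n : ℕ, 1 ≤ n →
      ∏ i ∈ Finset.range (n - 1),
          (T 1 + T (-1) - C (v ^ (2 * (i : ℤ) + 1) + v ^ (-(2 * (i : ℤ) + 1)))
            : LaurentPolynomial (RatFunc ℚ))
      = ∑ k ∈ Finset.Icc 1 n,
          C ((-1) ^ (n - k) * (brace (2 * k) / brace (2 * n)) * qbinom (2 * n) (n - k))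
            * ∑ j ∈ Finset.range k, T ((k : ℤ) - 1 - 2 * j) := by
  intro n hn
  obtain ⟨m, rfl⟩ : ∃ m, n = m + 1 := ⟨n - 1, by omega⟩
  apply mul_left_cancel₀ T_one_sub_T_neg_one_ne_zero
  rw [Nat.add_sub_cancel, T_one_sub_T_neg_one_mul_prod, hmNumerator, Finset.mul_sum]
  refine Finset.sum_congr rfl fun k hk ↦ ?_
  rw [mul_left_comm, T_one_sub_T_neg_one_mul_sum, hmCoeff_natCast_of_le (Finset.mem_Icc.mp hk).2]

end Stmt8
end
end

section
/- Define R(n,k) := (−1)^{n-k} {2k}/({2n−1}! [2n]) · [2n choose n−k] and S(k,j) := {k+j−1}_{2j−1}/{1}, both elements of ℚ(v). Then for all integers n, j ≥ 1: Σ_{k=1}^{n} R(n,k) · S(k,j) = δ_{n,j} (Kronecker delta). (Note S(k,j) = 0 for j > k, so the sum is effectively over j ≤ k ≤ n.) -/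
/-
Orthogonality of Habiro's cyclotomic transition matrices:
Σ_{k=1}^{n} R(n,k) S(k,j) = δ_{n,j} for n, j ≥ 1, where
R(n,k) = (−1)^{n-k} {2k}/({2n−1}! [2n]) [2n choose n−k] and
S(k,j) = {k+j−1}_{2j−1}/{1}.
-/

noncomputable section

namespace Stmt9

/-- The variable `v` of the field ℚ(v). -/
def v : RatFunc ℚ := RatFunc.X

/-- `{m} = v^m - v^{-m}`. -/
def brace (m : ℤ) : RatFunc ℚ := v ^ m - v ^ (-m)

/-- `{m}_k = ∏_{i=1}^{k} {m-i+1}`. -/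
def braceP (m : ℤ) (k : ℕ) : RatFunc ℚ := ∏ i ∈ Finset.range k, brace (m - i)

/-- `{m}! = ∏_{i=1}^{m} {i}`. -/
def braceFact (m : ℕ) : RatFunc ℚ := ∏ i ∈ Finset.range m, brace (i + 1)

/-- `[m] = {m}/{1}`. -/
def qint (m : ℤ) : RatFunc ℚ := brace m / brace 1

/-- The balanced q-binomial `[m choose k] = {m}_k / {k}_k`. -/
def qbinom (m : ℤ) (k : ℕ) : RatFunc ℚ := braceP m k / braceP k k

/-- `R(n,k) = (−1)^{n-k} {2k}/({2n−1}! [2n]) [2n choose n−k]`. -/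
def R (n k : ℕ) : RatFunc ℚ :=
  (-1) ^ (n - k) * (brace (2 * k) / (braceFact (2 * n - 1) * qint (2 * n)))
    * qbinom (2 * n) (n - k)

/-- `S(k,j) = {k+j−1}_{2j−1}/{1}`. -/
def S (k j : ℕ) : RatFunc ℚ := braceP ((k : ℤ) + j - 1) (2 * j - 1) / brace 1

/-
Since `S(k, j+1) = [k] · P_j(z_k)` with `z_k = v^{2k} + v^{-2k}` (`zeta`) and
`P_j = ∏_{i=1}^{j} (X - z_i)` (`prodXSubZeta`) monic of degree `j`, the sum is
`∑_k w(n,k) P_{j-1}(z_k)` with `w(n,k) = R(n,k) [k]` (`weight`), so it suffices to prove the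
moment identities `∑_{k=1}^{n} w(n,k) z_k^m = δ_{m,n-1}` for `m < n`: they pick out the
coefficient of `X^{n-1}` in `P_{j-1}`. Pairing `e = ±k` and expanding `z_e^m` binomially turns
each moment into a combination of values at odd `t` of
`Δ_n(t) = ∑_{i=0}^{2n} (-1)^i [2n choose i] v^{(n-i)t}` (`centralDiff`). By the `q`-binomial
theorem `Δ_n(t) = v^{nt} ∏_{r<2n} (1 - v^{2n-1-2r-t})`, which vanishes for odd `|t| < 2n`, and
`Δ_n(2n+1) = {2n}!`.
-/

open Finset Polynomial

theorem sum_mul_eval_eq_coeff {A ι : Type*} [CommSemiring A] (s : Finset ι) (w x : ι → A) {d : ℕ}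
    (hmoment : ∀ m ≤ d, ∑ i ∈ s, w i * x i ^ m = if m = d then 1 else 0) {p : A[X]}
    (hp : p.natDegree ≤ d) :
    ∑ i ∈ s, w i * p.eval (x i) = p.coeff d := by
  calc ∑ i ∈ s, w i * p.eval (x i)
      = ∑ m ∈ range (d + 1), p.coeff m * ∑ i ∈ s, w i * x i ^ m := by
        simp only [eval_eq_sum_range' (Nat.lt_succ_of_le hp), mul_sum]
        rw [sum_comm]
        exact sum_congr rfl fun m _ => sum_congr rfl fun i _ => by ring
    _ = p.coeff d := by
        rw [sum_congr rfl fun m hm => by rw [hmoment m (Nat.lt_succ_iff.1 (mem_range.1 hm))]]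
        simp

lemma sum_range_two_mul_add_one_eq_add_sum_pairs {M : Type*} [AddCommMonoid M] (f : ℕ → M) (n : ℕ) :
    ∑ i ∈ range (2 * n + 1), f i = f n + ∑ k ∈ Icc 1 n, (f (n - k) + f (n + k)) := by
  induction n generalizing f with
  | zero => simp
  | succ n ih =>
    have hshift : ∀ k ∈ Icc 1 n, f (n - k + 1) + f (n + k + 1) = f (n + 1 - k) + f (n + 1 + k) :=
      fun k hk => by rw [mem_Icc] at hk; rw [show n - k + 1 = n + 1 - k by omega, add_right_comm]
    rw [show 2 * (n + 1) + 1 = 2 * n + 1 + 1 + 1 by ring, sum_range_succ, sum_range_succ',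
      ih (fun i => f (i + 1)), sum_Icc_succ_top (by omega), sum_congr rfl hshift, Nat.sub_self,
      show n + 1 + (n + 1) = 2 * n + 1 + 1 by ring]
    abel

lemma sum_range_two_mul_succ (n : ℕ) : ∑ r ∈ range (2 * n), (r + 1) = n * (2 * n + 1) := by
  induction n with
  | zero => rfl
  | succ n ih =>
    rw [show 2 * (n + 1) = 2 * n + 1 + 1 by ring, sum_range_succ, sum_range_succ, ih]
    ring

lemma v_ne_zero : v ≠ 0 := RatFunc.X_ne_zero

lemma v_zpow_ne_one {m : ℤ} (hm : m ≠ 0) : v ^ m ≠ 1 := by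
  intro h
  have h' : v ^ m.natAbs = 1 := by
    rcases Int.natAbs_eq m with e | e
    · rwa [e, zpow_natCast] at h
    · rwa [e, zpow_neg, inv_eq_one, zpow_natCast] at h
  have hX : (X : ℚ[X]) ^ m.natAbs = 1 :=
    RatFunc.algebraMap_injective ℚ (by simpa [v, RatFunc.algebraMap_X] using h')
  simpa [hm] using congrArg natDegree hX

lemma brace_ne_zero {m : ℤ} (hm : m ≠ 0) : brace m ≠ 0 := by
  rw [brace, sub_ne_zero]
  intro h
  apply v_zpow_ne_one (show m + m ≠ 0 by omega)
  rw [zpow_add₀ v_ne_zero]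
  nth_rw 1 [h]
  rw [← zpow_add₀ v_ne_zero, neg_add_cancel, zpow_zero]

@[simp] lemma brace_zero : brace 0 = 0 := by simp [brace]

lemma brace_add (a b : ℤ) : brace (a + b) = v ^ a * brace b + v ^ (-b) * brace a := by
  simp only [brace, mul_sub, ← zpow_add₀ v_ne_zero]
  ring_nf

def zeta (e : ℤ) : RatFunc ℚ := v ^ (2 * e) + v ^ (-(2 * e))

lemma zeta_neg (e : ℤ) : zeta (-e) = zeta e := by
  simp only [zeta, mul_neg, neg_neg, add_comm]

lemma brace_add_mul_brace_sub (a b : ℤ) : brace (a + b) * brace (a - b) = zeta a - zeta b := by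
  simp only [brace, zeta, sub_mul, mul_sub, ← zpow_add₀ v_ne_zero]
  ring_nf

lemma brace_two_mul_mul_brace (e : ℤ) :
    brace (2 * e) * brace e = v ^ (3 * e) - v ^ e + (v ^ (-(3 * e)) - v ^ (-e)) := by
  simp only [brace, sub_mul, mul_sub, ← zpow_add₀ v_ne_zero]
  ring_nf

lemma zeta_pow (e : ℤ) (m : ℕ) :
    zeta e ^ m = ∑ u ∈ range (m + 1), (m.choose u : RatFunc ℚ) * v ^ (2 * e * (m - 2 * u)) := by
  rw [zeta, add_comm, add_pow]
  refine sum_congr rfl fun u hu => ?_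
  rw [← zpow_natCast, ← zpow_natCast, ← zpow_mul, ← zpow_mul, ← zpow_add₀ v_ne_zero,
    Nat.cast_sub (by simpa [Nat.lt_succ_iff] using hu)]
  ring_nf

lemma braceFact_succ (m : ℕ) : braceFact (m + 1) = braceFact m * brace (m + 1) :=
  prod_range_succ _ _

lemma braceFact_ne_zero (m : ℕ) : braceFact m ≠ 0 :=
  prod_ne_zero_iff.2 fun i _ => brace_ne_zero (by positivity)

lemma braceP_succ (m : ℤ) (k : ℕ) : braceP m (k + 1) = braceP m k * brace (m - k) :=
  prod_range_succ _ _

lemma braceP_succ_succ (m : ℤ) (k : ℕ) : braceP (m + 1) (k + 1) = brace (m + 1) * braceP m k := by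
  rw [braceP, prod_range_succ', braceP]
  simp [mul_comm]

lemma braceFact_add (a b : ℕ) : braceFact (a + b) = braceFact a * braceP (a + b) b := by
  induction b with
  | zero => simp [braceP]
  | succ b ih =>
    rw [← add_assoc, braceFact_succ, ih, Nat.cast_succ, ← add_assoc, braceP_succ_succ]
    push_cast
    ring

lemma braceP_self (k : ℕ) : braceP k k = braceFact k := by
  simpa [braceFact] using (braceFact_add 0 k).symm

@[simp] lemma qbinom_zero_right (m : ℤ) : qbinom m 0 = 1 := by simp [qbinom, braceP]

lemma qbinom_eq_zero_of_lt {N k : ℕ} (h : N < k) : qbinom N k = 0 := by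
  rw [qbinom, braceP, prod_eq_zero (mem_range.2 h) (by simp), zero_div]

lemma qbinom_eq_div {N k : ℕ} (h : k ≤ N) :
    qbinom N k = braceFact N / (braceFact k * braceFact (N - k)) := by
  have hN := braceFact_add (N - k) k
  rw [← Nat.cast_add, Nat.sub_add_cancel h] at hN
  rw [qbinom, braceP_self, hN]
  field_simp [braceFact_ne_zero]

lemma qbinom_sub_right {N k : ℕ} (h : k ≤ N) : qbinom N (N - k) = qbinom N k := by
  rw [qbinom_eq_div h, qbinom_eq_div (N.sub_le k), Nat.sub_sub_self h, mul_comm]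

lemma qbinom_succ_succ (m : ℤ) (k : ℕ) :
    qbinom (m + 1) (k + 1) =
      v ^ ((k : ℤ) + 1) * qbinom m (k + 1) + v ^ ((k : ℤ) - m) * qbinom m k := by
  have hpascal := brace_add ((k : ℤ) + 1) (m - k)
  rw [show (k : ℤ) + 1 + (m - k) = m + 1 by ring, neg_sub] at hpascal
  have hk : brace ((k : ℤ) + 1) ≠ 0 := brace_ne_zero (by positivity)
  rw [qbinom, qbinom, qbinom, braceP_self, braceP_self, braceFact_succ,
    braceP_succ_succ, braceP_succ, hpascal]
  field_simp [braceFact_ne_zero]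

theorem prod_one_add_zpow_mul_eq_sum_qbinom (N : ℕ) (y : RatFunc ℚ) :
    ∏ r ∈ range N, (1 + v ^ ((N : ℤ) - 1 - 2 * r) * y) =
      ∑ k ∈ range (N + 1), qbinom N k * y ^ k := by
  induction N generalizing y with
  | zero => simp
  | succ N ih =>
    have hsplit : ∏ r ∈ range (N + 1), (1 + v ^ (((N + 1 : ℕ) : ℤ) - 1 - 2 * r) * y) =
        (∏ r ∈ range N, (1 + v ^ ((N : ℤ) - 1 - 2 * r) * (v * y))) * (1 + v ^ (-(N : ℤ)) * y) := by
      rw [prod_range_succ]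
      congr 1
      · refine prod_congr rfl fun r _ => ?_
        rw [← mul_assoc, ← zpow_add_one₀ v_ne_zero]
        push_cast
        ring_nf
      · push_cast
        ring_nf
    have hpascal (k : ℕ) : qbinom ((N + 1 : ℕ) : ℤ) (k + 1) * y ^ (k + 1) =
        qbinom N (k + 1) * (v * y) ^ (k + 1) + qbinom N k * (v * y) ^ k * (v ^ (-(N : ℤ)) * y) := by
      rw [Nat.cast_succ, qbinom_succ_succ, zpow_add_one₀ v_ne_zero, zpow_sub₀ v_ne_zero, zpow_neg,
        zpow_natCast, zpow_natCast]
      ring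
    have hshift : ∑ k ∈ range (N + 1), qbinom N (k + 1) * (v * y) ^ (k + 1) + 1 =
        ∑ k ∈ range (N + 1), qbinom N k * (v * y) ^ k := by
      have h := sum_range_succ' (fun k => qbinom N k * (v * y) ^ k) (N + 1)
      rw [sum_range_succ, qbinom_eq_zero_of_lt N.lt_succ_self] at h
      simpa using h.symm
    rw [hsplit, ih, sum_range_succ' (fun k => qbinom ((N + 1 : ℕ) : ℤ) k * y ^ k),
      qbinom_zero_right]
    simp only [hpascal, sum_add_distrib, ← sum_mul]
    linear_combination -hshift

def centralDiff (n : ℕ) (t : ℤ) : RatFunc ℚ :=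
  ∑ i ∈ range (2 * n + 1), (-1) ^ i * qbinom (2 * n) i * v ^ ((n - i : ℤ) * t)

lemma centralDiff_eq_prod (n : ℕ) (t : ℤ) :
    centralDiff n t = v ^ (n * t) * ∏ r ∈ range (2 * n), (1 - v ^ (2 * n - 1 - 2 * r - t)) := by
  have h := prod_one_add_zpow_mul_eq_sum_qbinom (2 * n) (-v ^ (-t))
  have hfac (r : ℕ) :
      1 + v ^ (((2 * n : ℕ) : ℤ) - 1 - 2 * r) * -v ^ (-t) = 1 - v ^ (2 * n - 1 - 2 * r - t) := by
    rw [mul_neg, ← zpow_add₀ v_ne_zero, ← sub_eq_add_neg]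
    push_cast
    ring_nf
  simp only [hfac] at h
  rw [h, centralDiff, mul_sum]
  refine sum_congr rfl fun i _ => ?_
  rw [neg_pow (v ^ (-t)), ← zpow_natCast (v ^ (-t)), ← zpow_mul,
    show ((n : ℤ) - i) * t = n * t + -t * i by ring, zpow_add₀ v_ne_zero]
  push_cast
  ring

lemma centralDiff_two_mul_add_one (n : ℕ) {s : ℤ} (h₁ : -n ≤ s) (h₂ : s ≤ n) :
    centralDiff n (2 * s + 1) = if s = n then braceFact (2 * n) else 0 := by
  rw [centralDiff_eq_prod]
  split_ifs with hs
  · subst hs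
    have hfac (r : ℕ) :
        brace (r + 1) = v ^ (r + 1) * (1 - v ^ (2 * n - 1 - 2 * r - (2 * n + 1) : ℤ)) := by
      rw [brace, mul_sub, mul_one, ← zpow_natCast, ← zpow_add₀ v_ne_zero]
      push_cast
      ring_nf
    rw [braceFact, prod_congr rfl fun r _ => hfac r, prod_mul_distrib, prod_pow_eq_pow_sum,
      sum_range_two_mul_succ, ← zpow_natCast]
    push_cast
    ring_nf
  · have hr : (n - 1 - s).toNat ∈ range (2 * n) := by
      rw [mem_range]
      omega
    rw [prod_eq_zero hr, mul_zero]
    rw [Int.toNat_of_nonneg (by omega),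
      show (2 * n - 1 - 2 * (n - 1 - s) - (2 * s + 1) : ℤ) = 0 by ring, zpow_zero, sub_self]

def weight (n k : ℕ) : RatFunc ℚ :=
  (-1) ^ (n - k) * qbinom (2 * n) (n - k) * (brace (2 * k) * brace k) / braceFact (2 * n)

lemma sum_choose_mul_centralDiff (n m : ℕ) (c : ℤ) :
    ∑ u ∈ range (m + 1), (m.choose u : RatFunc ℚ) * centralDiff n (2 * (m - 2 * u) + c) =
      ∑ i ∈ range (2 * n + 1),
        (-1) ^ i * qbinom (2 * n) i * (v ^ ((n - i : ℤ) * c) * zeta (n - i) ^ m) := by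
  simp only [centralDiff, mul_sum]
  rw [sum_comm]
  refine sum_congr rfl fun i _ => ?_
  rw [zeta_pow, mul_sum, mul_sum]
  refine sum_congr rfl fun u _ => ?_
  rw [show ((n : ℤ) - i) * (2 * (m - 2 * u) + c) = (n - i) * c + 2 * (n - i) * (m - 2 * u) by ring,
    zpow_add₀ v_ne_zero]
  ring

lemma braceFact_mul_sum_weight_mul_zeta_pow (n m : ℕ) :
    braceFact (2 * n) * ∑ k ∈ Icc 1 n, weight n k * zeta k ^ m =
      ∑ i ∈ range (2 * n + 1),
          (-1) ^ i * qbinom (2 * n) i * (v ^ ((n - i : ℤ) * 3) * zeta (n - i) ^ m) -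
        ∑ i ∈ range (2 * n + 1),
          (-1) ^ i * qbinom (2 * n) i * (v ^ ((n - i : ℤ) * 1) * zeta (n - i) ^ m) := by
  rw [← sum_sub_distrib, sum_range_two_mul_add_one_eq_add_sum_pairs]
  simp only [sub_self, zero_mul, zpow_zero, zero_add]
  rw [mul_sum]
  refine sum_congr rfl fun k hk => ?_
  rw [mem_Icc] at hk
  have hsign : (-1 : RatFunc ℚ) ^ (n + k) = (-1) ^ (n - k) := by
    rw [show n + k = n - k + 2 * k by omega, pow_add, pow_mul, neg_one_sq, one_pow, mul_one]
  have hsymm : qbinom (2 * n) (n + k) = qbinom (2 * n) (n - k) := by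
    have h := qbinom_sub_right (N := 2 * n) (k := n - k) (by omega)
    rw [show 2 * n - (n - k) = n + k by omega] at h
    exact_mod_cast h
  rw [hsign, hsymm, weight, show ((n : ℤ) - ↑(n - k)) = k by omega,
    show ((n : ℤ) - ↑(n + k)) = -k by omega, zeta_neg, brace_two_mul_mul_brace]
  field_simp [braceFact_ne_zero]
  ring_nf

theorem sum_weight_mul_zeta_pow {n m : ℕ} (hm : m < n) :
    ∑ k ∈ Icc 1 n, weight n k * zeta k ^ m = if m = n - 1 then 1 else 0 := by
  have hmoment : braceFact (2 * n) * ∑ k ∈ Icc 1 n, weight n k * zeta k ^ m =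
      ∑ u ∈ range (m + 1), (m.choose u : RatFunc ℚ) *
        (centralDiff n (2 * (m - 2 * u + 1) + 1) - centralDiff n (2 * (m - 2 * u) + 1)) := by
    rw [braceFact_mul_sum_weight_mul_zeta_pow, ← sum_choose_mul_centralDiff,
      ← sum_choose_mul_centralDiff, ← sum_sub_distrib]
    refine sum_congr rfl fun u _ => ?_
    ring_nf
  apply mul_left_cancel₀ (braceFact_ne_zero (2 * n))
  rw [hmoment, sum_eq_single 0]
  · rw [centralDiff_two_mul_add_one _ (by omega) (by omega),
      centralDiff_two_mul_add_one _ (by omega) (by omega),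
      if_neg (show (m : ℤ) - 2 * (0 : ℕ) ≠ n by omega)]
    by_cases h : m = n - 1
    · rw [if_pos (by omega), if_pos h]
      simp
    · rw [if_neg (by omega), if_neg h]
      simp
  · intro u hu hu0
    rw [mem_range] at hu
    rw [centralDiff_two_mul_add_one _ (by omega) (by omega),
      centralDiff_two_mul_add_one _ (by omega) (by omega), if_neg (by omega), if_neg (by omega),
      sub_zero, mul_zero]
  · simp

lemma R_mul_qint {n : ℕ} (hn : 1 ≤ n) (k : ℕ) : R n k * qint k = weight n k := by
  have hfact : braceFact (2 * n) = braceFact (2 * n - 1) * brace (2 * n) := by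
    have h := braceFact_succ (2 * n - 1)
    rw [Nat.sub_add_cancel (by omega)] at h
    rw [h, show ((2 * n - 1 : ℕ) : ℤ) + 1 = 2 * n by omega]
  have h2n : brace (2 * n) ≠ 0 := brace_ne_zero (by omega)
  have h1 : brace 1 ≠ 0 := brace_ne_zero one_ne_zero
  rw [R, weight, qint, qint, hfact]
  field_simp [braceFact_ne_zero]

def prodXSubZeta (d : ℕ) : (RatFunc ℚ)[X] := ∏ i ∈ range d, (X - C (zeta (i + 1)))

lemma prodXSubZeta_monic (d : ℕ) : (prodXSubZeta d).Monic :=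
  monic_prod_of_monic _ _ fun _ _ => monic_X_sub_C _

lemma prodXSubZeta_natDegree (d : ℕ) : (prodXSubZeta d).natDegree = d := by
  rw [prodXSubZeta, natDegree_prod_of_monic _ _ fun _ _ => monic_X_sub_C _]
  simp

lemma braceP_add_two_mul_add_one (k : ℤ) (j : ℕ) :
    braceP (k + j) (2 * j + 1) = brace k * ∏ i ∈ range j, (zeta k - zeta (i + 1)) := by
  induction j with
  | zero => simp [braceP]
  | succ j ih =>
    rw [show 2 * (j + 1) + 1 = 2 * j + 1 + 1 + 1 by ring, Nat.cast_succ, ← add_assoc,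
      braceP_succ_succ, braceP_succ, ih, prod_range_succ, ← brace_add_mul_brace_sub,
      show k + j - ((2 * j + 1 : ℕ) : ℤ) = k - (j + 1) by push_cast; ring, add_assoc]
    ring

lemma S_succ_eq_qint_mul_eval (k j : ℕ) :
    S k (j + 1) = qint k * (prodXSubZeta j).eval (zeta k) := by
  rw [S, show (k : ℤ) + ↑(j + 1) - 1 = k + j by push_cast; ring,
    show 2 * (j + 1) - 1 = 2 * j + 1 by omega, braceP_add_two_mul_add_one, prodXSubZeta, eval_prod,
    qint]
  simp only [eval_sub, eval_X, eval_C]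
  ring

lemma S_eq_zero_of_lt {k j : ℕ} (h : k < j) : S k j = 0 := by
  rw [S, braceP, prod_eq_zero (i := k + j - 1) (mem_range.2 (by omega))
    (by rw [← brace_zero]; congr 1; omega), zero_div]

theorem R_S_orthogonality :
    ∀ n j : ℕ, 1 ≤ n → 1 ≤ j →
      ∑ k ∈ Finset.Icc 1 n, R n k * S k j = if n = j then 1 else 0 := by
  intro n j hn hj
  obtain ⟨d, rfl⟩ : ∃ d, j = d + 1 := ⟨j - 1, by omega⟩
  rcases lt_or_ge n (d + 1) with hlt | hle
  · rw [if_neg hlt.ne]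
    exact sum_eq_zero fun k hk => by rw [S_eq_zero_of_lt (by rw [mem_Icc] at hk; omega), mul_zero]
  calc ∑ k ∈ Icc 1 n, R n k * S k (d + 1)
      = ∑ k ∈ Icc 1 n, weight n k * (prodXSubZeta d).eval (zeta k) :=
        sum_congr rfl fun k _ => by rw [S_succ_eq_qint_mul_eval, ← mul_assoc, R_mul_qint hn]
    _ = (prodXSubZeta d).coeff (n - 1) :=
        sum_mul_eval_eq_coeff _ _ _ (fun m hm => sum_weight_mul_zeta_pow (by omega))
          (by rw [prodXSubZeta_natDegree]; omega)
    _ = if n = d + 1 then 1 else 0 := by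
        split_ifs with h
        · rw [show n - 1 = d by omega, ← (prodXSubZeta_monic d).coeff_natDegree,
            prodXSubZeta_natDegree]
        · exact coeff_eq_zero_of_natDegree_lt (by rw [prodXSubZeta_natDegree]; omega)

end Stmt9
end
end

section
/- Let U⁻ be the ℚ(v)-algebra presented by generators F_α, F_β and the two quantum Serre relations F_α² F_β − (v + v^{-1}) F_α F_β F_α + F_β F_α² = 0 and F_β² F_α − (v + v^{-1}) F_β F_α F_β + F_α F_β² = 0. Set f₂ := F_β F_α − v F_α F_β and f₂' := F_α F_β − v F_β F_α. Then for all n ∈ ℕ the following identity holds in U⁻: (f₂')^n = (−v)^{-n} Σ_{k=0}^{n} v^{-k(k-3)/2} (v − v^{-1})^k [n choose k] F_β^k f₂^{n-k} F_α^k. -/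
/-
In U⁻ of U_v(sl₃) (type A₂), with f₂ = F_β F_α − v F_α F_β and
f₂' = F_α F_β − v F_β F_α, one has for all n:
(f₂')^n = (−v)^{-n} Σ_{k=0}^{n} v^{-k(k-3)/2} (v − v⁻¹)^k [n choose k] F_β^k f₂^{n-k} F_α^k.
-/

noncomputable section

namespace Stmt11

/-- The variable `v` of the field ℚ(v). -/
def v : RatFunc ℚ := RatFunc.X

/-- Generators: 0 = F_α, 1 = F_β. -/
abbrev Free := FreeAlgebra (RatFunc ℚ) (Fin 2)

def ga : Free := FreeAlgebra.ι _ 0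
def gb : Free := FreeAlgebra.ι _ 1

/-- The quantum Serre relations of type A₂. -/
inductive Rel : Free → Free → Prop
  | serre₁ : Rel (ga * ga * gb + gb * ga * ga) ((v + v⁻¹) • (ga * gb * ga))
  | serre₂ : Rel (gb * gb * ga + ga * gb * gb) ((v + v⁻¹) • (gb * ga * gb))

/-- The negative part U⁻ of U_v(sl₃). -/
abbrev Um := RingQuot Rel

def Fα : Um := RingQuot.mkAlgHom (RatFunc ℚ) Rel ga
def Fβ : Um := RingQuot.mkAlgHom (RatFunc ℚ) Rel gb

/-- PBW root vector `f₂ = T_α(F_β) = F_β F_α − v F_α F_β`. -/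
def f₂ : Um := Fβ * Fα - v • (Fα * Fβ)

/-- PBW root vector `f₂' = T_β(F_α) = F_α F_β − v F_β F_α`. -/
def f₂' : Um := Fα * Fβ - v • (Fβ * Fα)

/-- `[m] = (v^m − v^{-m})/(v − v⁻¹)`. -/
def qint (m : ℤ) : RatFunc ℚ := (v ^ m - v ^ (-m)) / (v - v⁻¹)

/-- `[m]! = ∏_{i=1}^m [i]`. -/
def qfact (m : ℕ) : RatFunc ℚ := ∏ i ∈ Finset.range m, qint (i + 1)

/-- `[n choose k] = [n]!/([k]! [n−k]!)`. -/
def qbinom (n k : ℕ) : RatFunc ℚ := qfact n / (qfact k * qfact (n - k))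

/-! Put `g := -v • f₂' = f₂ + (v² - 1) F_β F_α`. The Serre relations make `f₂` q-commute with
`F_α` and `F_β` and hence commute with `g`, so left multiplication by `g` sends the monomial
`F_β^k f₂^m F_α^k` to `v^{-k} (F_β^k f₂^{m+1} F_α^k + v^m (v² - 1) F_β^{k+1} f₂^m F_α^{k+1})`.
Expanding `g^n` by induction, the coefficients of the monomials obey the q-Pascal rule
`[n+1, k+1] = v^{-(k+1)} [n, k+1] + v^{n-k} [n, k]`. -/

section QCommutator

variable {K A : Type*} [Field K] [Ring A] [Algebra K A]

def qcomm (w : K) (x y : A) : A := x * y - w • (y * x)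

def QSerre (w : K) (x y : A) : Prop := x * x * y + y * x * x = (w + w⁻¹) • (x * y * x)

variable {w : K} {a b x y : A}

theorem pow_mul_eq_smul_mul_pow (h : x * y = w • (y * x)) (k : ℕ) :
    x ^ k * y = w ^ k • (y * x ^ k) := by
  induction k with
  | zero => simp
  | succ k ih =>
    rw [pow_succ, mul_assoc, h, mul_smul_comm, ← mul_assoc, ih, smul_mul_assoc, smul_smul,
      mul_assoc, ← pow_succ, ← pow_succ']

theorem QSerre.mul_qcomm (h : QSerre w x y) (hw : w ≠ 0) :
    x * qcomm w y x = w • (qcomm w y x * x) := by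
  unfold QSerre at h
  simp only [qcomm, mul_sub, sub_mul, mul_smul_comm, smul_mul_assoc, smul_sub, smul_smul,
    ← mul_assoc]
  linear_combination (norm := match_scalars <;> field_simp <;> ring) (-w) • h

theorem QSerre.qcomm_mul (h : QSerre w x y) (hw : w ≠ 0) :
    qcomm w x y * x = w • (x * qcomm w x y) := by
  unfold QSerre at h
  simp only [qcomm, mul_sub, sub_mul, mul_smul_comm, smul_mul_assoc, smul_sub, smul_smul,
    ← mul_assoc]
  linear_combination (norm := match_scalars <;> field_simp <;> ring) (-w) • h

theorem neg_smul_qcomm (w : K) (a b : A) :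
    -w • qcomm w a b = qcomm w b a + (w ^ 2 - 1) • (b * a) := by
  simp only [qcomm]
  module

theorem commute_qcomm_mul (h₁ : QSerre w a b) (h₂ : QSerre w b a) (hw : w ≠ 0) :
    Commute (qcomm w b a) (b * a) := by
  calc qcomm w b a * (b * a) = b * (w • (qcomm w b a * a)) := by
        rw [← mul_assoc, h₂.qcomm_mul hw, smul_mul_assoc, mul_smul_comm, mul_assoc]
    _ = b * a * qcomm w b a := by rw [← h₁.mul_qcomm hw, mul_assoc]

theorem commute_neg_smul_qcomm (h₁ : QSerre w a b) (h₂ : QSerre w b a) (hw : w ≠ 0) :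
    Commute (-w • qcomm w a b) (qcomm w b a) := by
  rw [neg_smul_qcomm]
  exact (Commute.refl _).add_left ((commute_qcomm_mul h₁ h₂ hw).symm.smul_left _)

theorem neg_smul_qcomm_mul_pbw (h₁ : QSerre w a b) (h₂ : QSerre w b a) (hw : w ≠ 0) (k m : ℕ) :
    (-w • qcomm w a b) * (b ^ k * qcomm w b a ^ m * a ^ k) =
      (w ^ k)⁻¹ • (b ^ k * qcomm w b a ^ (m + 1) * a ^ k +
        (w ^ m * (w ^ 2 - 1)) • (b ^ (k + 1) * qcomm w b a ^ m * a ^ (k + 1))) := by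
  set g := -w • qcomm w a b
  set f := qcomm w b a
  have hg : g = f + (w ^ 2 - 1) • (b * a) := neg_smul_qcomm w a b
  have hbg : b ^ k * g = w ^ k • (g * b ^ k) := by
    refine pow_mul_eq_smul_mul_pow ?_ k
    rw [mul_smul_comm, h₂.mul_qcomm hw, smul_mul_assoc, smul_comm]
  have hgb : g * b ^ k = (w ^ k)⁻¹ • (b ^ k * g) := by
    rw [hbg, smul_smul, inv_mul_cancel₀ (pow_ne_zero k hw), one_smul]
  have hfb : f ^ m * b = w ^ m • (b * f ^ m) := pow_mul_eq_smul_mul_pow (h₂.qcomm_mul hw) m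
  have hgf : g * f ^ m = f ^ m * g := ((commute_neg_smul_qcomm h₁ h₂ hw).pow_right m).eq
  calc g * (b ^ k * f ^ m * a ^ k) = (w ^ k)⁻¹ • (b ^ k * (f ^ m * (g * a ^ k))) := by
        rw [mul_assoc, ← mul_assoc g, hgb, smul_mul_assoc, mul_assoc, ← mul_assoc g, hgf,
          mul_assoc]
    _ = (w ^ k)⁻¹ • (b ^ k * (f ^ m * (f * a ^ k + (w ^ 2 - 1) • (b * (a * a ^ k))))) := by
        rw [hg, add_mul, smul_mul_assoc, mul_assoc]
    _ = _ := by
        rw [mul_add, mul_smul_comm, ← mul_assoc (f ^ m) b, hfb, pow_succ f, pow_succ b,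
          ← pow_succ' a, mul_comm (w ^ m)]
        simp only [mul_add, smul_mul_assoc, mul_smul_comm, smul_smul, mul_assoc]

end QCommutator

theorem sum_range_add_eq_sum_range_succ {M : Type*} [AddCommMonoid M] {F G H : ℕ → M} {n : ℕ}
    (h₀ : G 0 = F 0) (hsucc : ∀ k < n, G (k + 1) + H k = F (k + 1)) (hn : H n = F (n + 1)) :
    ∑ k ∈ Finset.range (n + 1), (G k + H k) = ∑ k ∈ Finset.range (n + 2), F k := by
  rw [Finset.sum_add_distrib, Finset.sum_range_succ' G, Finset.sum_range_succ H,
    Finset.sum_range_succ F, Finset.sum_range_succ' F, h₀, hn,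
    ← Finset.sum_congr rfl fun k hk => hsucc k (Finset.mem_range.1 hk), Finset.sum_add_distrib]
  abel

theorem v_ne_zero : v ≠ 0 := RatFunc.X_ne_zero

theorem intDegree_v_zpow (m : ℤ) : RatFunc.intDegree (v ^ m) = m := by
  have hnat (n : ℕ) : RatFunc.intDegree (v ^ n) = n := by
    induction n with
    | zero => simp
    | succ n ih =>
      rw [pow_succ, RatFunc.intDegree_mul (pow_ne_zero n v_ne_zero) v_ne_zero, ih, v,
        RatFunc.intDegree_X, Nat.cast_succ]
  obtain ⟨n, rfl | rfl⟩ := Int.eq_nat_or_neg m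
  · rw [zpow_natCast, hnat]
  · rw [zpow_neg, zpow_natCast, RatFunc.intDegree_inv, hnat]

theorem v_zpow_sub_zpow_neg_ne_zero {m : ℤ} (hm : m ≠ 0) : v ^ m - v ^ (-m) ≠ 0 := by
  intro h
  have h2m : v ^ (m + m) = 1 :=
    calc v ^ (m + m) = v ^ m * v ^ (-m) := by rw [zpow_add₀ v_ne_zero, ← sub_eq_zero.1 h]
      _ = 1 := by rw [← zpow_add₀ v_ne_zero, add_neg_cancel, zpow_zero]
  have := congrArg RatFunc.intDegree h2m
  rw [intDegree_v_zpow, RatFunc.intDegree_one] at this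
  omega

theorem qint_ne_zero {m : ℤ} (hm : m ≠ 0) : qint m ≠ 0 := by
  refine div_ne_zero (v_zpow_sub_zpow_neg_ne_zero hm) ?_
  simpa using v_zpow_sub_zpow_neg_ne_zero one_ne_zero

theorem qint_add (m n : ℤ) : qint (m + n) = v ^ (-m) * qint n + v ^ n * qint m := by
  simp only [qint, neg_add, zpow_add₀ v_ne_zero]
  field_simp
  ring

theorem qfact_zero : qfact 0 = 1 := Finset.prod_range_zero _

theorem qfact_succ (m : ℕ) : qfact (m + 1) = qfact m * qint (m + 1) :=
  Finset.prod_range_succ _ m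

theorem qfact_ne_zero (m : ℕ) : qfact m ≠ 0 :=
  Finset.prod_ne_zero_iff.2 fun i _ => qint_ne_zero (by omega)

theorem qbinom_zero_right (n : ℕ) : qbinom n 0 = 1 := by
  rw [qbinom, Nat.sub_zero, qfact_zero, one_mul, div_self (qfact_ne_zero n)]

theorem qbinom_self (n : ℕ) : qbinom n n = 1 := by
  rw [qbinom, Nat.sub_self, qfact_zero, mul_one, div_self (qfact_ne_zero n)]

theorem qbinom_succ_succ {n k : ℕ} (h : k < n) :
    qbinom (n + 1) (k + 1) = (v ^ (k + 1))⁻¹ * qbinom n (k + 1) + v ^ (n - k) * qbinom n k := by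
  obtain ⟨j, rfl⟩ := Nat.exists_eq_add_of_lt h
  have hn : qint ((k + j + 1 : ℕ) + 1) =
      (v ^ (k + 1))⁻¹ * qint (j + 1) + v ^ (j + 1) * qint (k + 1) := by
    rw [show ((k + j + 1 : ℕ) + 1 : ℤ) = (k + 1 : ℕ) + (j + 1 : ℕ) by push_cast; ring, qint_add,
      zpow_neg, zpow_natCast, zpow_natCast]
    push_cast
    ring
  simp only [qbinom, show k + j + 1 + 1 - (k + 1) = j + 1 by omega,
    show k + j + 1 - (k + 1) = j by omega, show k + j + 1 - k = j + 1 by omega,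
    qfact_succ (k + j + 1), qfact_succ k, qfact_succ j, hn]
  have := qfact_ne_zero k
  have := qfact_ne_zero j
  have := qint_ne_zero (m := k + 1) (by omega)
  have := qint_ne_zero (m := j + 1) (by omega)
  field_simp

theorem v_zpow_exponent_succ (k : ℕ) :
    v ^ (-(((k + 1 : ℕ) : ℤ) * (((k + 1 : ℕ) : ℤ) - 3)) / 2) =
      v ^ (-((k : ℤ) * ((k : ℤ) - 3)) / 2) * v * (v ^ k)⁻¹ := by
  have he : -(((k + 1 : ℕ) : ℤ) * (((k + 1 : ℕ) : ℤ) - 3)) / 2 =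
      -((k : ℤ) * ((k : ℤ) - 3)) / 2 + 1 + -(k : ℤ) := by
    rw [show -(((k + 1 : ℕ) : ℤ) * (((k + 1 : ℕ) : ℤ) - 3)) =
        -((k : ℤ) * ((k : ℤ) - 3)) + (1 - k) * 2 by push_cast; ring,
      Int.add_mul_ediv_right _ _ two_ne_zero]
    ring
  rw [he, zpow_add₀ v_ne_zero, zpow_add₀ v_ne_zero, zpow_one, zpow_neg, zpow_natCast]

def pbwCoeff (n k : ℕ) : RatFunc ℚ :=
  v ^ (-((k : ℤ) * ((k : ℤ) - 3)) / 2) * (v - v⁻¹) ^ k * qbinom n k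

theorem pbwCoeff_zero_right (n : ℕ) : pbwCoeff n 0 = 1 := by
  simp [pbwCoeff, qbinom_zero_right]

theorem pbwCoeff_succ_self (n : ℕ) :
    pbwCoeff (n + 1) (n + 1) = pbwCoeff n n * ((v ^ n)⁻¹ * (v ^ 2 - 1)) := by
  rw [pbwCoeff, pbwCoeff, qbinom_self, qbinom_self, v_zpow_exponent_succ, pow_succ (v - v⁻¹)]
  have := v_ne_zero
  field_simp

theorem pbwCoeff_succ_succ {n k : ℕ} (h : k < n) :
    pbwCoeff (n + 1) (k + 1) =
      pbwCoeff n (k + 1) * (v ^ (k + 1))⁻¹ +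
        pbwCoeff n k * ((v ^ k)⁻¹ * (v ^ (n - k) * (v ^ 2 - 1))) := by
  rw [pbwCoeff, pbwCoeff, pbwCoeff, qbinom_succ_succ h, v_zpow_exponent_succ,
    pow_succ (v - v⁻¹)]
  have := v_ne_zero
  field_simp

section Expansion

variable {A : Type*} [Ring A] [Algebra (RatFunc ℚ) A] {a b : A}

theorem neg_smul_qcomm_pow (h₁ : QSerre v a b) (h₂ : QSerre v b a) (n : ℕ) :
    (-v • qcomm v a b) ^ n =
      ∑ k ∈ Finset.range (n + 1), pbwCoeff n k • (b ^ k * qcomm v b a ^ (n - k) * a ^ k) := by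
  induction n with
  | zero => simp [pbwCoeff_zero_right]
  | succ n ih =>
    rw [pow_succ', ih, Finset.mul_sum]
    calc _ = ∑ k ∈ Finset.range (n + 1),
          ((pbwCoeff n k * (v ^ k)⁻¹) • (b ^ k * qcomm v b a ^ (n - k + 1) * a ^ k) +
            (pbwCoeff n k * ((v ^ k)⁻¹ * (v ^ (n - k) * (v ^ 2 - 1)))) •
              (b ^ (k + 1) * qcomm v b a ^ (n - k) * a ^ (k + 1))) := by
          refine Finset.sum_congr rfl fun k _ => ?_
          rw [mul_smul_comm, neg_smul_qcomm_mul_pbw h₁ h₂ v_ne_zero]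
          simp only [smul_add, smul_smul]
      _ = _ := by
          refine sum_range_add_eq_sum_range_succ ?_ (fun k hk => ?_) ?_
          · simp [pbwCoeff_zero_right]
          · rw [show n - (k + 1) + 1 = n - k by omega, Nat.add_sub_add_right, ← add_smul,
              pbwCoeff_succ_succ hk]
          · simp [pbwCoeff_succ_self]

theorem qcomm_pow (h₁ : QSerre v a b) (h₂ : QSerre v b a) (n : ℕ) :
    qcomm v a b ^ n = ∑ k ∈ Finset.range (n + 1),
        ((-v) ^ (-(n : ℤ)) * v ^ (-((k : ℤ) * ((k : ℤ) - 3)) / 2)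
            * (v - v⁻¹) ^ k * qbinom n k) •
          (b ^ k * qcomm v b a ^ (n - k) * a ^ k) := by
  rw [← inv_smul_smul₀ (neg_ne_zero.2 v_ne_zero) (qcomm v a b), smul_pow,
    neg_smul_qcomm_pow h₁ h₂, Finset.smul_sum]
  simp only [smul_smul, zpow_neg, zpow_natCast, inv_pow, pbwCoeff, mul_assoc]

end Expansion

theorem qSerre_Fα_Fβ : QSerre v Fα Fβ := by
  simpa [QSerre, Fα, Fβ] using RingQuot.mkAlgHom_rel (RatFunc ℚ) Rel.serre₁

theorem qSerre_Fβ_Fα : QSerre v Fβ Fα := by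
  simpa [QSerre, Fα, Fβ] using RingQuot.mkAlgHom_rel (RatFunc ℚ) Rel.serre₂

-- `f₂ = qcomm v Fβ Fα` and `f₂' = qcomm v Fα Fβ` hold by definition.
theorem f₂'_pow :
    ∀ n : ℕ,
      f₂' ^ n = ∑ k ∈ Finset.range (n + 1),
        ((-v) ^ (-(n : ℤ)) * v ^ (-((k : ℤ) * ((k : ℤ) - 3)) / 2)
            * (v - v⁻¹) ^ k * qbinom n k) •
          (Fβ ^ k * f₂ ^ (n - k) * Fα ^ k) :=
  qcomm_pow qSerre_Fα_Fβ qSerre_Fβ_Fα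

end Stmt11
end
end

section
/- If f : ℕ → ℚ(q) and g : ℕ → ℚ(q) are both q-holonomic sequences, then their pointwise sum f + g is a q-holonomic sequence. -/
/-!
Let `ℚ(q,x)` act on germs at infinity of sequences `ℕ → ℚ(q)`, with `x` acting as multiplication
by `qⁿ`; this is well defined because a nonzero polynomial vanishes at only finitely many of the
distinct points `qⁿ`. A sequence is then q-holonomic exactly when its shifts `n ↦ f (n + m)` span
a finite-dimensional subspace: a recurrence with nonzero leading coefficient expresses every
shift through the previous ones, and conversely a linear dependence among the shifts becomes a
recurrence after clearing denominators and multiplying by a polynomial that vanishes at the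
finitely many `qⁿ` where it fails. The shifts of `f + g` lie in the sum of the spans for `f`
and `g`.
-/

noncomputable section

namespace StmtQH

/-- A sequence `f : ℕ → ℚ(q)` is q-holonomic if there are `d ∈ ℕ` and polynomials
`a₀, …, a_d ∈ ℚ(q)[x]`, not all zero, with `Σ_{i=0}^{d} a_i(qⁿ) f(n+i) = 0` for all `n`. -/
def IsQHolonomic (f : ℕ → RatFunc ℚ) : Prop :=
  ∃ (d : ℕ) (a : Fin (d + 1) → Polynomial (RatFunc ℚ)),
    (∃ i, a i ≠ 0) ∧
    ∀ n : ℕ, ∑ i : Fin (d + 1), (a i).eval ((RatFunc.X : RatFunc ℚ) ^ n) * f (n + i) = 0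

end StmtQH

namespace StmtQH

open Polynomial Filter Function

local notation "ℚ(q)" => RatFunc ℚ
local notation "ℚ(q,x)" => RatFunc (RatFunc ℚ)
local notation "q" => (RatFunc.X : RatFunc ℚ)
local notation "𝔾" => Germ (atTop : Filter ℕ) (RatFunc ℚ)

theorem RatFunc.injective_pow_X {K : Type*} [Field K] :
    Injective (fun n : ℕ => (RatFunc.X : RatFunc K) ^ n) := by
  intro m n h
  have h' : (X ^ m : K[X]) = X ^ n := by
    apply RatFunc.algebraMap_injective K
    simpa only [map_pow, RatFunc.algebraMap_X] using h
  simpa using congrArg natDegree h'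

theorem eventually_eval_pow_ne_zero {K : Type*} [Field K] {c : K} (hc : Injective (c ^ · : ℕ → K))
    {p : K[X]} (hp : p ≠ 0) : ∀ᶠ n in atTop, p.eval (c ^ n) ≠ 0 := by
  rw [← Nat.cofinite_eq_atTop]
  exact ((finite_setOfPred_isRoot hp).preimage hc.injOn).compl_mem_cofinite

def evalGerm : ℚ(q)[X] →+* 𝔾 :=
  (Germ.coeRingHom atTop).comp (RingHom.pi fun n => evalRingHom (q ^ n))

theorem evalGerm_apply (p : ℚ(q)[X]) : evalGerm p = ↑(fun n => p.eval (q ^ n)) := rfl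

theorem isUnit_evalGerm {p : ℚ(q)[X]} (hp : p ≠ 0) : IsUnit (evalGerm p) := by
  refine .of_mul_eq_one (↑(fun n => (p.eval (q ^ n))⁻¹)) (Germ.coe_eq.mpr ?_)
  filter_upwards [eventually_eval_pow_ne_zero RatFunc.injective_pow_X hp] with n hn
  exact mul_inv_cancel₀ hn

instance : Algebra ℚ(q,x) 𝔾 :=
  (IsLocalization.lift (M := nonZeroDivisors ℚ(q)[X])
    fun p => isUnit_evalGerm (nonZeroDivisors.ne_zero p.2)).toAlgebra

theorem algebraMap_smul_eq_evalGerm_mul (p : ℚ(q)[X]) (u : 𝔾) :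
    algebraMap ℚ(q)[X] ℚ(q,x) p • u = evalGerm p * u := by
  rw [Algebra.smul_def]
  exact congrArg (· * u) (IsLocalization.lift_eq _ _)

def shiftGerm (f : ℕ → ℚ(q)) (m : ℕ) : 𝔾 := ↑(fun n => f (n + m))

def shiftSpan (f : ℕ → ℚ(q)) : Submodule ℚ(q,x) 𝔾 :=
  Submodule.span ℚ(q,x) (Set.range (shiftGerm f))

theorem sum_algebraMap_smul_shiftGerm {ι : Type*} (s : Finset ι) (a : ι → ℚ(q)[X])
    (j : ι → ℕ) (f : ℕ → ℚ(q)) :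
    ∑ i ∈ s, algebraMap ℚ(q)[X] ℚ(q,x) (a i) • shiftGerm f (j i) =
      ↑(fun n => ∑ i ∈ s, (a i).eval (q ^ n) * f (n + j i)) := by
  simp only [algebraMap_smul_eq_evalGerm_mul, evalGerm_apply, shiftGerm, ← Germ.coe_mul]
  rw [← Finset.sum_fn]
  exact (map_sum (Germ.coeRingHom (R := ℚ(q)) (atTop : Filter ℕ)) _ s).symm

theorem IsQHolonomic.exists_last_ne_zero {f : ℕ → ℚ(q)} (hf : IsQHolonomic f) :
    ∃ (k : ℕ) (a : Fin (k + 1) → ℚ(q)[X]), a (Fin.last k) ≠ 0 ∧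
      ∀ n : ℕ, ∑ i, (a i).eval (q ^ n) * f (n + i) = 0 := by
  obtain ⟨d, a, ⟨i, hi⟩, hrec⟩ := hf
  induction d with
  | zero =>
    obtain rfl := Subsingleton.elim (α := Fin 1) i (Fin.last 0)
    exact ⟨0, a, hi, hrec⟩
  | succ d ih =>
    by_cases hlast : a (Fin.last (d + 1)) = 0
    · obtain ⟨j, rfl⟩ := (Fin.exists_castSucc_eq (i := i)).mpr fun h => hi (by rwa [h])
      refine ih (a ∘ Fin.castSucc) (fun n => ?_) j hi
      simpa [Fin.sum_univ_castSucc, hlast] using hrec n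
    · exact ⟨d + 1, a, hlast, hrec⟩

/-- This is the recurrence at `n + m`: `a i (qᵐ x)` evaluated at `qⁿ` is `a i (qⁿ⁺ᵐ)`. -/
theorem sum_smul_shiftGerm_eq_zero {f : ℕ → ℚ(q)} {k : ℕ} {a : Fin (k + 1) → ℚ(q)[X]}
    (hrec : ∀ n : ℕ, ∑ i, (a i).eval (q ^ n) * f (n + i) = 0) (m : ℕ) :
    ∑ i, algebraMap ℚ(q)[X] ℚ(q,x) ((a i).comp (C (q ^ m) * X)) • shiftGerm f (m + i) = 0 := by
  rw [sum_algebraMap_smul_shiftGerm, ← Germ.coe_zero]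
  congr 1
  funext n
  simpa [pow_add, mul_comm, add_assoc] using hrec (n + m)

theorem shiftGerm_mem_span {f : ℕ → ℚ(q)} {k : ℕ} {a : Fin (k + 1) → ℚ(q)[X]}
    (hlast : a (Fin.last k) ≠ 0) (hrec : ∀ n : ℕ, ∑ i, (a i).eval (q ^ n) * f (n + i) = 0)
    (m : ℕ) : shiftGerm f m ∈ Submodule.span ℚ(q,x) (shiftGerm f '' Set.Iio k) := by
  induction m using Nat.strong_induction_on with
  | _ m ih =>
  rcases lt_or_ge m k with hm | hm
  · exact Submodule.subset_span ⟨m, hm, rfl⟩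
  obtain ⟨m, rfl⟩ := Nat.exists_eq_add_of_le' hm
  set c : Fin (k + 1) → ℚ(q,x) := fun i => algebraMap ℚ(q)[X] ℚ(q,x) ((a i).comp (C (q ^ m) * X))
  have hc : c (Fin.last k) ≠ 0 := by
    refine RatFunc.algebraMap_ne_zero fun h => hlast ?_
    exact (comp_C_mul_X_eq_zero_iff
      (mem_nonZeroDivisors_of_ne_zero (pow_ne_zero m RatFunc.X_ne_zero))).mp h
  have hrel := sum_smul_shiftGerm_eq_zero hrec m
  rw [Fin.sum_univ_castSucc, Fin.val_last, add_eq_zero_iff_eq_neg'] at hrel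
  rw [← inv_smul_smul₀ hc (shiftGerm f (m + k)), hrel]
  refine Submodule.smul_mem _ _ (Submodule.neg_mem _ (Submodule.sum_mem _ fun i _ => ?_))
  exact Submodule.smul_mem _ _ (ih _ (by simp))

theorem IsQHolonomic.finiteDimensional_shiftSpan {f : ℕ → ℚ(q)} (hf : IsQHolonomic f) :
    FiniteDimensional ℚ(q,x) (shiftSpan f) := by
  obtain ⟨k, a, hlast, hrec⟩ := hf.exists_last_ne_zero
  have : FiniteDimensional ℚ(q,x) (Submodule.span ℚ(q,x) (shiftGerm f '' Set.Iio k)) :=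
    FiniteDimensional.span_of_finite _ ((Set.finite_Iio k).image _)
  exact Submodule.finiteDimensional_of_le
    (Submodule.span_le.mpr (Set.range_subset_iff.mpr (shiftGerm_mem_span hlast hrec)))

theorem isQHolonomic_of_eventually {f : ℕ → ℚ(q)} {d : ℕ} {a : Fin (d + 1) → ℚ(q)[X]}
    (ha : ∃ i, a i ≠ 0) (hrec : ∀ᶠ n in atTop, ∑ i, (a i).eval (q ^ n) * f (n + i) = 0) :
    IsQHolonomic f := by
  obtain ⟨M, hM⟩ := eventually_atTop.mp hrec
  obtain ⟨i, hi⟩ := ha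
  -- `P` vanishes at `q⁰, …, q^(M-1)`, where the recurrence may fail.
  set P : ℚ(q)[X] := ∏ t ∈ Finset.range M, (X - C (q ^ t))
  have hP : P ≠ 0 := (monic_prod_of_monic _ _ fun t _ => monic_X_sub_C _).ne_zero
  refine ⟨d, fun i => P * a i, ⟨i, mul_ne_zero hP hi⟩, fun n => ?_⟩
  simp_rw [eval_mul, mul_assoc, ← Finset.mul_sum]
  rcases le_or_gt M n with h | h
  · rw [hM n h, mul_zero]
  · rw [eval_prod, Finset.prod_eq_zero (Finset.mem_range.2 h) (by simp), zero_mul]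

theorem isQHolonomic_of_sum_smul_shiftGerm_eq_zero {f : ℕ → ℚ(q)} {d : ℕ}
    {r : Fin (d + 1) → ℚ(q,x)} (hr : ∃ i, r i ≠ 0) (hrel : ∑ i, r i • shiftGerm f i = 0) :
    IsQHolonomic f := by
  obtain ⟨b, hb⟩ := IsLocalization.exist_integer_multiples_of_finite (nonZeroDivisors ℚ(q)[X]) r
  choose a ha using hb
  have hb0 : algebraMap ℚ(q)[X] ℚ(q,x) b ≠ 0 :=
    RatFunc.algebraMap_ne_zero (nonZeroDivisors.ne_zero b.2)
  obtain ⟨i, hi⟩ := hr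
  refine isQHolonomic_of_eventually (a := a) ⟨i, fun h => ?_⟩ (Germ.coe_eq.mp ?_)
  · have hai := ha i
    rw [h, map_zero, Algebra.smul_def] at hai
    exact mul_ne_zero hb0 hi hai.symm
  · rw [← sum_algebraMap_smul_shiftGerm]
    simp_rw [ha, Algebra.smul_def (b : ℚ(q)[X]), mul_smul, ← Finset.smul_sum, hrel, smul_zero]
    rfl

theorem isQHolonomic_of_finiteDimensional_shiftSpan {f : ℕ → ℚ(q)}
    [FiniteDimensional ℚ(q,x) (shiftSpan f)] : IsQHolonomic f := by
  set N := Module.finrank ℚ(q,x) (shiftSpan f)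
  have hdep : ¬LinearIndependent ℚ(q,x) (fun i : Fin (N + 1) => shiftGerm f i) := by
    intro hli
    have hcard := linearIndependent_iff_card_eq_finrank_span.mp hli
    have hle : Set.finrank ℚ(q,x) (Set.range fun i : Fin (N + 1) => shiftGerm f i) ≤ N :=
      Submodule.finrank_mono (Submodule.span_mono (Set.range_subset_iff.mpr fun i => ⟨i, rfl⟩))
    simp only [Fintype.card_fin] at hcard
    omega
  obtain ⟨r, hrel, hr⟩ := Fintype.not_linearIndependent_iff.mp hdep
  exact isQHolonomic_of_sum_smul_shiftGerm_eq_zero hr hrel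

theorem isQHolonomic_iff_finiteDimensional_shiftSpan {f : ℕ → ℚ(q)} :
    IsQHolonomic f ↔ FiniteDimensional ℚ(q,x) (shiftSpan f) :=
  ⟨IsQHolonomic.finiteDimensional_shiftSpan, fun _ => isQHolonomic_of_finiteDimensional_shiftSpan⟩

theorem shiftSpan_add_le (f g : ℕ → ℚ(q)) :
    shiftSpan (fun n => f n + g n) ≤ shiftSpan f ⊔ shiftSpan g :=
  Submodule.span_le.mpr <| Set.range_subset_iff.mpr fun m =>
    Submodule.add_mem_sup (Submodule.subset_span (Set.mem_range_self m))
      (Submodule.subset_span (Set.mem_range_self m))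

theorem isQHolonomic_add (f g : ℕ → RatFunc ℚ)
    (hf : IsQHolonomic f) (hg : IsQHolonomic g) :
    IsQHolonomic (fun n => f n + g n) := by
  rw [isQHolonomic_iff_finiteDimensional_shiftSpan] at *
  exact Submodule.finiteDimensional_of_le (shiftSpan_add_le f g)

end StmtQH
end
end

section
/- If f : ℕ → ℚ(q) and g : ℕ → ℚ(q) are both q-holonomic sequences, then their pointwise product f · g is a q-holonomic sequence. -/
noncomputable section

/-! If `f` satisfies a recurrence of order `d`, then every shift of `f`, multiplied by a suitable
nonzero polynomial in `qⁿ`, is a combination of `f(n), …, f(n+d-1)` with coefficients in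
`ℚ(q)[qⁿ]`: shift the recurrence (which turns `a(qⁿ)` into `a(qˢqⁿ)`, still nonzero as `q ≠ 0`)
and clear its leading coefficient. So, up to nonzero factors, the shifts `f(n+j) g(n+j)` lie in
the module spanned by the `d e` products `f(n+i) g(n+i')`, and any `d e + 1` of them satisfy a
nontrivial linear relation over `ℚ(q)[qⁿ]`, which is a recurrence for `f g`. -/

open Polynomial Submodule

section Module

variable {A M : Type*} [CommRing A] [AddCommGroup M] [Module A M]

theorem exists_smul_mem_span_of_not_linearIndependent (v : ℕ → M) {d : ℕ}
    (h : ¬LinearIndependent A fun i : Fin (d + 1) => v i) :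
    ∃ n, ∃ a ≠ (0 : A), a • v n ∈ span A (Set.range fun i : Fin n => v i) := by
  induction d with
  | zero =>
    obtain ⟨g, hg, i, hi⟩ := Fintype.not_linearIndependent_iff.mp h
    exact ⟨0, g i, hi, by simpa [Fin.fin_one_eq_zero i] using hg⟩
  | succ d ih =>
    obtain ⟨g, hg, i, hi⟩ := Fintype.not_linearIndependent_iff.mp h
    rw [Fin.sum_univ_castSucc, Fin.val_last] at hg
    by_cases hlast : g (Fin.last _) = 0
    · obtain ⟨j, rfl⟩ : ∃ j : Fin (d + 1), j.castSucc = i :=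
        Fin.exists_castSucc_eq.mpr (by rintro rfl; exact hi hlast)
      rw [hlast, zero_smul, add_zero] at hg
      exact ih (Fintype.not_linearIndependent_iff.mpr ⟨_, hg, j, hi⟩)
    · refine ⟨d + 1, _, hlast, ?_⟩
      rw [eq_neg_of_add_eq_zero_right hg]
      exact neg_mem (sum_mem fun j _ => smul_mem _ _ (subset_span ⟨j, rfl⟩))

variable [IsDomain A]

theorem mem_comap_torsion_iff {N : Submodule A M} {x : M} :
    x ∈ (torsion A (M ⧸ N)).comap N.mkQ ↔ ∃ b ≠ (0 : A), b • x ∈ N := by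
  simp [← Quotient.mk_smul, Quotient.mk_eq_zero, mem_nonZeroDivisors_iff_ne_zero]

theorem mem_comap_torsion_of_smul_mem {N : Submodule A M} {a : A} (ha : a ≠ 0) {x : M}
    (h : a • x ∈ (torsion A (M ⧸ N)).comap N.mkQ) : x ∈ (torsion A (M ⧸ N)).comap N.mkQ := by
  obtain ⟨b, hb, hx⟩ := mem_comap_torsion_iff.mp h
  exact mem_comap_torsion_iff.mpr ⟨b * a, mul_ne_zero hb ha, by rwa [mul_smul]⟩

theorem LinearIndependent.smul_of_ne_zero {ι : Type*} [Fintype ι] {v : ι → M}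
    (hv : LinearIndependent A v) {c : ι → A} (hc : ∀ i, c i ≠ 0) :
    LinearIndependent A fun i => c i • v i := by
  refine Fintype.linearIndependent_iff.mpr fun g hg i => ?_
  have hgc : ∑ i, (g i * c i) • v i = 0 := by simpa [mul_smul] using hg
  exact (mul_eq_zero.mp (Fintype.linearIndependent_iff.mp hv _ hgc i)).resolve_right (hc i)

theorem not_linearIndependent_of_smul_mem_span {ι κ : Type*} [Fintype ι] [Fintype κ]
    (hcard : Fintype.card κ < Fintype.card ι) {v : ι → M} {w : κ → M} {c : ι → A}
    (hc : ∀ i, c i ≠ 0) (hv : ∀ i, c i • v i ∈ span A (Set.range w)) :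
    ¬LinearIndependent A v := by
  classical
  intro hli
  have := linearIndependent_le_span_aux' _ (hli.smul_of_ne_zero hc) _ (Set.range_subset_iff.mpr hv)
  exact (this.trans (Fintype.card_range_le w)).not_gt hcard

end Module

/-- Sequences in `R`, made an `R[X]`-algebra by letting `p` act on the `n`-th term as
multiplication by `p(qⁿ)`. This module has torsion (`p(qⁿ)` may vanish for some `n`), so
denominators are cleared in the torsion of a quotient rather than in a fraction field. -/
def QSeq {R : Type*} (_ : R) : Type _ := ℕ → R

namespace QSeq

variable {R : Type*} [CommRing R] (q : R)

instance : CommRing (QSeq q) := inferInstanceAs (CommRing (ℕ → R))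

def evalPow : R[X] →+* QSeq q := RingHom.pi fun n => evalRingHom (q ^ n)

instance : Algebra R[X] (QSeq q) := (evalPow q).toAlgebra

theorem smul_apply (p : R[X]) (f : QSeq q) (n : ℕ) : (p • f) n = p.eval (q ^ n) * f n := rfl

theorem sum_apply {ι : Type*} (s : Finset ι) (g : ι → QSeq q) (n : ℕ) :
    (∑ i ∈ s, g i) n = ∑ i ∈ s, g i n :=
  Finset.sum_apply n s g

def shift (s : ℕ) : QSeq q →+* QSeq q where
  toFun f n := f (n + s)
  map_one' := rfl
  map_mul' _ _ := rfl
  map_zero' := rfl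
  map_add' _ _ := rfl

theorem shift_apply (s : ℕ) (f : QSeq q) (n : ℕ) : shift q s f n = f (n + s) := rfl

theorem shift_shift (s t : ℕ) (f : QSeq q) : shift q s (shift q t f) = shift q (t + s) f := by
  funext n
  simp only [shift_apply, add_assoc, add_comm s]

theorem shift_smul (s : ℕ) (p : R[X]) (f : QSeq q) :
    shift q s (p • f) = p.comp (C (q ^ s) * X) • shift q s f := by
  funext n
  simp [smul_apply, shift_apply, eval_comp, pow_add, mul_comm]

variable {q}

def IsHolonomic (f : QSeq q) : Prop :=
  ∃ d, ¬LinearIndependent R[X] fun i : Fin (d + 1) => shift q i f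

theorem sum_smul_shift_eq_zero_iff {d : ℕ} (a : Fin (d + 1) → R[X]) (f : QSeq q) :
    ∑ i, a i • shift q i f = 0 ↔ ∀ n, ∑ i, (a i).eval (q ^ n) * f (n + i) = 0 :=
  funext_iff.trans (forall_congr' fun n => by rw [sum_apply]; rfl)

def lowerShifts (f : QSeq q) (d : ℕ) : Submodule R[X] (QSeq q) :=
  span R[X] (Set.range fun i : Fin d => shift q i f)

theorem exists_smul_shift_mem_lowerShifts [IsDomain R] (hq : q ≠ 0) {f : QSeq q} {d : ℕ}
    {a : R[X]} (ha : a ≠ 0) (h : a • shift q d f ∈ lowerShifts f d) (j : ℕ) :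
    ∃ b ≠ (0 : R[X]), b • shift q j f ∈ lowerShifts f d := by
  refine mem_comap_torsion_iff.mp ?_
  induction j using Nat.strong_induction_on with
  | _ j ih =>
  rcases lt_or_ge j d with hj | hj
  · exact mem_comap_torsion_iff.mpr ⟨1, one_ne_zero, by
      rw [one_smul]; exact subset_span ⟨⟨j, hj⟩, rfl⟩⟩
  · obtain ⟨s, rfl⟩ := Nat.exists_eq_add_of_le hj
    obtain ⟨c, hc⟩ := (mem_span_range_iff_exists_fun _).mp h
    have hrec := congrArg (shift q s) hc
    simp only [map_sum, shift_smul, shift_shift] at hrec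
    have hsa : a.comp (C (q ^ s) * X) ≠ 0 :=
      (comp_C_mul_X_eq_zero_iff (mem_nonZeroDivisors_of_ne_zero (pow_ne_zero s hq))).not.mpr ha
    refine mem_comap_torsion_of_smul_mem hsa ?_
    rw [← hrec]
    exact sum_mem fun i _ => smul_mem _ _ (ih _ (by omega))

theorem lowerShifts_mul_lowerShifts (f g : QSeq q) (d e : ℕ) :
    lowerShifts f d * lowerShifts g e =
      span R[X] (Set.range fun ij : Fin d × Fin e => shift q ij.1 f * shift q ij.2 g) := by
  rw [lowerShifts, lowerShifts, span_mul_span, ← Set.image2_mul, Set.image2_range]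

theorem smul_shift_mul_mem_mul {f g : QSeq q} {d e j : ℕ} {b c : R[X]}
    (hf : b • shift q j f ∈ lowerShifts f d) (hg : c • shift q j g ∈ lowerShifts g e) :
    (b * c) • shift q j (f * g) ∈ lowerShifts f d * lowerShifts g e := by
  rw [map_mul, ← smul_mul_smul_comm]
  exact mul_mem_mul hf hg

theorem IsHolonomic.mul [IsDomain R] (hq : q ≠ 0) {f g : QSeq q} (hf : IsHolonomic f)
    (hg : IsHolonomic g) : IsHolonomic (f * g) := by
  obtain ⟨d, a, ha, hfa⟩ :=
    exists_smul_mem_span_of_not_linearIndependent (shift q · f) hf.choose_spec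
  obtain ⟨e, a', ha', hga⟩ :=
    exists_smul_mem_span_of_not_linearIndependent (shift q · g) hg.choose_spec
  choose b hb hfb using exists_smul_shift_mem_lowerShifts hq ha hfa
  choose c hc hgc using exists_smul_shift_mem_lowerShifts hq ha' hga
  refine ⟨d * e, not_linearIndependent_of_smul_mem_span
    (w := fun ij : Fin d × Fin e => shift q ij.1 f * shift q ij.2 g) (by simp)
    (fun j => mul_ne_zero (hb j) (hc j)) fun j => ?_⟩
  rw [← lowerShifts_mul_lowerShifts]
  exact smul_shift_mul_mem_mul (hfb j) (hgc j)

end QSeq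

namespace StmtQH

theorem isQHolonomic_iff_isHolonomic (f : ℕ → RatFunc ℚ) :
    IsQHolonomic f ↔ QSeq.IsHolonomic (q := (RatFunc.X : RatFunc ℚ)) f := by
  simp only [IsQHolonomic, QSeq.IsHolonomic, Fintype.not_linearIndependent_iff]
  exact exists₂_congr fun d a =>
    and_comm.trans (and_congr_left' (QSeq.sum_smul_shift_eq_zero_iff a f).symm)

theorem isQHolonomic_mul (f g : ℕ → RatFunc ℚ)
    (hf : IsQHolonomic f) (hg : IsQHolonomic g) :
    IsQHolonomic (fun n => f n * g n) := by
  rw [isQHolonomic_iff_isHolonomic] at hf hg ⊢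
  exact hf.mul RatFunc.X_ne_zero hg

end StmtQH
end
end
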